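/- arXiv:1009.5016 — 4 statements merged into one kernel-verified Lean document; each statement's English description precedes it below -/
import Mathlib

section
/- For all n ≥ 1, the number of overpartition pairs of n satisfies pp̄(n) ≡ 0 (mod 4). -/
open PowerSeries Finset

noncomputable def ppbar (n : ℕ) : ℚ :=
  PowerSeries.coeff (R := ℚ) n (∏ k ∈ Finset.range (n + 1),
    ((1 + PowerSeries.X ^ (k + 1)) ^ 2 * ((1 - PowerSeries.X ^ (k + 1))⁻¹) ^ 2))

/-!
Since `(1 + x)² = (1 - x)² + 4x`, each factor `(1 + qᵏ)² / (1 - qᵏ)²` of the generating function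
equals `1 + 4 qᵏ / (1 - qᵏ)²`, a power series with integer coefficients that is `≡ 1 (mod 4)`.
Hence so is the product, and all its coefficients beyond the constant term are divisible by 4.
-/

theorem dvd_prod_sub_one {R ι : Type*} [CommRing R] {c : R} {s : Finset ι} {f : ι → R}
    (h : ∀ i ∈ s, c ∣ f i - 1) : c ∣ ∏ i ∈ s, f i - 1 :=
  Finset.prod_induction f (fun x => c ∣ x - 1)
    (fun a b ha hb => by
      have hab : a * b - 1 = (a - 1) * b + (b - 1) := by ring
      rw [hab]
      exact dvd_add (dvd_mul_of_dvd_left ha b) hb)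
    (by simp) h

theorem sq_one_add_mul_sq_of_mul_eq_one {R : Type*} [CommRing R] {x y : R}
    (h : (1 - x) * y = 1) : (1 + x) ^ 2 * y ^ 2 = 1 + 4 * (x * y ^ 2) := by
  linear_combination ((1 - x) * y + 1) * h

theorem PowerSeries.map_invOfUnit {R K : Type*} [CommRing R] [Field K] (f : R →+* K)
    (φ : R⟦X⟧) (u : Rˣ) (h : constantCoeff φ = u) :
    map f (invOfUnit φ u) = (map f φ)⁻¹ := by
  have hu : constantCoeff (map f φ) ≠ 0 := by
    rw [← coeff_zero_eq_constantCoeff_apply, coeff_map, coeff_zero_eq_constantCoeff_apply, h]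
    exact (u.map f.toMonoidHom).ne_zero
  rw [eq_inv_iff_mul_eq_one hu, ← map_mul, invOfUnit_mul φ u h, map_one]

theorem PowerSeries.dvd_coeff_of_C_dvd_sub_one {R : Type*} [CommRing R] {c : R} {φ : R⟦X⟧}
    (h : C c ∣ φ - 1) {n : ℕ} (hn : n ≠ 0) : c ∣ coeff n φ := by
  obtain ⟨ψ, hψ⟩ := h
  refine ⟨coeff n ψ, ?_⟩
  rw [← coeff_C_mul, ← hψ, map_sub, coeff_one, if_neg hn, sub_zero]

theorem ppbar_mod_four (n : ℕ) (hn : 1 ≤ n) : ∃ m : ℤ, ppbar n = 4 * m := by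
  have hunit (k : ℕ) : constantCoeff (1 - X ^ (k + 1) : ℤ⟦X⟧) = ((1 : ℤˣ) : ℤ) := by simp
  set P : ℤ⟦X⟧ := ∏ k ∈ range (n + 1),
    (1 + X ^ (k + 1)) ^ 2 * invOfUnit (1 - X ^ (k + 1)) 1 ^ 2 with hP_def
  have hP : ppbar n = Int.castRingHom ℚ (coeff n P) := by
    rw [ppbar, ← coeff_map, hP_def, map_prod (PowerSeries.map _)]
    refine congrArg _ (prod_congr rfl fun k _ => ?_)
    rw [map_mul, map_pow, map_pow, map_invOfUnit _ _ _ (hunit k)]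
    simp
  have hP4 : C (4 : ℤ) ∣ P - 1 := dvd_prod_sub_one fun k _ =>
    ⟨X ^ (k + 1) * invOfUnit (1 - X ^ (k + 1)) 1 ^ 2, by
      rw [sq_one_add_mul_sq_of_mul_eq_one (mul_invOfUnit _ _ (hunit k)), map_ofNat]
      ring⟩
  obtain ⟨m, hm⟩ := dvd_coeff_of_C_dvd_sub_one hP4 (by omega : n ≠ 0)
  exact ⟨m, by rw [hP, hm]; simp⟩
end

section
/- For all n ≥ 0, pp̄(3n+2) ≡ 0 (mod 3). -/
/-
Modulo 3, `(1 - q^k)^3 = 1 - q^(3k)`, so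
`(1 + q^k)^2 / (1 - q^k)^2 = (1 + q^k)(1 - q^(2k)) / (1 - q^(3k))` and the generating function of
`pp̄` is congruent to `ψ(q)` times a series in `q^3`, where `ψ(q) = ∏ (1 + q^k)(1 - q^(2k))`.
By Gauss's identity `ψ(q) = ∑_{s ∈ ℤ} q^(2s^2 - s)`, and `2s^2 - s` is never `2` mod 3.
Gauss's identity is obtained in truncated form from Cauchy's `q`-binomial theorem with
`a = X^(4n+3)`, `b = 1`, `q = X^4`: each term of the expansion is `X^(c + 2s^2 - s)` times a series
congruent to `1` modulo a high power of `X`.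
-/

open PowerSeries Finset

variable {R : Type*} [CommRing R]

/-- The Gaussian binomial coefficient `[i + j choose i]_q`. -/
def qBinom (q : R) : ℕ → ℕ → R
  | 0, _ => 1
  | _ + 1, 0 => 1
  | i + 1, j + 1 => qBinom q (i + 1) j + q ^ (j + 1) * qBinom q i (j + 1)

@[simp] theorem qBinom_zero_left (q : R) (j : ℕ) : qBinom q 0 j = 1 := by simp [qBinom]

@[simp] theorem qBinom_zero_right (q : R) (i : ℕ) : qBinom q i 0 = 1 := by cases i <;> simp [qBinom]

theorem qBinom_succ_succ (q : R) (i j : ℕ) :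
    qBinom q (i + 1) (j + 1) = qBinom q (i + 1) j + q ^ (j + 1) * qBinom q i (j + 1) := by
  rw [qBinom]

theorem qBinom_mul_prod_one_sub_pow (q : R) (i j : ℕ) :
    qBinom q i j * ∏ l ∈ range j, (1 - q ^ (l + 1)) = ∏ l ∈ range j, (1 - q ^ (i + l + 1)) := by
  induction i generalizing j with
  | zero => simp
  | succ i ihi =>
    induction j with
    | zero => simp
    | succ j ihj =>
      rw [qBinom_succ_succ, add_mul, mul_assoc, ihi, prod_range_succ (fun l => 1 - q ^ (l + 1)),
        ← mul_assoc, ihj, prod_range_succ' (fun l => 1 - q ^ (i + l + 1)), prod_range_succ]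
      simp only [show ∀ k, i + (k + 1) + 1 = i + 1 + k + 1 by omega, add_zero]
      ring

theorem prod_add_mul_pow_eq_sum_qBinom (a b q : R) (m : ℕ) :
    ∏ l ∈ range m, (a + b * q ^ l) =
      ∑ p ∈ antidiagonal m, q ^ p.1.choose 2 * qBinom q p.1 p.2 * a ^ p.2 * b ^ p.1 := by
  set T : ℕ × ℕ → R := fun p => q ^ p.1.choose 2 * qBinom q p.1 p.2 * a ^ p.2 * b ^ p.1
  have pascal : ∀ i j,
      T (i + 1, j + 1) = a * T (i + 1, j) + b * q ^ (i + j + 1) * T (i, j + 1) := by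
    intro i j
    simp only [T, qBinom_succ_succ, Nat.choose_succ_succ', Nat.choose_one_right]
    ring
  have axis_a : ∀ j, T (0, j + 1) = a * T (0, j) := fun j => by simp [T, pow_succ]; ring
  have axis_b : ∀ i, T (i + 1, 0) = b * q ^ i * T (i, 0) := fun i => by
    simp [T, Nat.choose_succ_succ', pow_succ, pow_add]; ring
  induction m with
  | zero => simp [T]
  | succ m ih =>
    rw [prod_range_succ, ih]
    -- Split `antidiagonal (m + 2)` into its two end points and the interior, where Pascal applies.
    cases m with
    | zero => simp [T, Nat.sum_antidiagonal_succ]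
    | succ m =>
      have inner : ∑ p ∈ antidiagonal m, T (p.1 + 1, p.2 + 1) =
          a * ∑ p ∈ antidiagonal m, T (p.1 + 1, p.2) +
            b * q ^ (m + 1) * ∑ p ∈ antidiagonal m, T (p.1, p.2 + 1) := by
        rw [mul_sum, mul_sum, ← sum_add_distrib]
        refine sum_congr rfl fun p hp => ?_
        rw [pascal, ← mem_antidiagonal.1 hp]
      have h1 := Nat.sum_antidiagonal_succ (n := m + 1) (f := T)
      have h2 := Nat.sum_antidiagonal_succ' (n := m) (f := fun p => T (p.1 + 1, p.2))
      have h3 := Nat.sum_antidiagonal_succ (n := m) (f := T)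
      have h4 := Nat.sum_antidiagonal_succ' (n := m) (f := T)
      linear_combination -h1 - h2 - inner + a * h3 + b * q ^ (m + 1) * h4 - axis_a (m + 1) -
        axis_b (m + 1)

theorem prod_range_smodEq_of_le {A : Type*} [CommRing A] {I : Ideal A} (u : ℕ → A) {M M' : ℕ}
    (hu : ∀ k, M ≤ k → u k ≡ 1 [SMOD I]) (h : M ≤ M') :
    ∏ k ∈ range M', u k ≡ ∏ k ∈ range M, u k [SMOD I] := by
  rw [← prod_range_mul_prod_Ico u h]
  conv_rhs => rw [← mul_one (∏ k ∈ range M, u k)]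
  exact SModEq.rfl.mul (by simpa using SModEq.prod fun k hk => hu k (mem_Ico.1 hk).1)

theorem prod_range_two_mul {M : Type*} [CommMonoid M] (f : ℕ → M) (m : ℕ) :
    ∏ k ∈ range (2 * m), f k = ∏ i ∈ range m, f (2 * i) * f (2 * i + 1) := by
  induction m with
  | zero => simp
  | succ m ih => rw [mul_add_one, prod_range_succ, prod_range_succ, ih, prod_range_succ, mul_assoc]

theorem coeff_eq_of_smodEq {f g : R⟦X⟧} {t : ℕ} (h : f ≡ g [SMOD Ideal.span {(X : R⟦X⟧) ^ t}])
    {i : ℕ} (hi : i < t) : coeff i f = coeff i g := by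
  rw [SModEq.sub_mem, Ideal.mem_span_singleton, X_pow_dvd_iff] at h
  simpa [sub_eq_zero] using h i hi

theorem one_add_X_pow_mul_smodEq_one (f : R⟦X⟧) {t e : ℕ} (h : t ≤ e) :
    1 + X ^ e * f ≡ 1 [SMOD Ideal.span {(X : R⟦X⟧) ^ t}] := by
  rw [SModEq.sub_mem, add_sub_cancel_left, Ideal.mem_span_singleton]
  exact (pow_dvd_pow X h).mul_right f

theorem one_sub_X_pow_smodEq_one {t e : ℕ} (h : t ≤ e) :
    1 - X ^ e ≡ 1 [SMOD Ideal.span {(X : R⟦X⟧) ^ t}] := by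
  simpa [sub_eq_add_neg] using one_add_X_pow_mul_smodEq_one (-1 : R⟦X⟧) h

theorem prod_one_sub_X_pow_smodEq_one {ι : Type*} (s : Finset ι) {e : ι → ℕ} {t : ℕ}
    (h : ∀ l ∈ s, t ≤ e l) : ∏ l ∈ s, (1 - X ^ e l) ≡ 1 [SMOD Ideal.span {(X : R⟦X⟧) ^ t}] := by
  have := SModEq.prod fun l hl => one_sub_X_pow_smodEq_one (R := R) (h l hl)
  rwa [prod_const_one] at this

theorem coeff_X_pow_mul_eq_zero_of_smodEq_one {u : R⟦X⟧} {t e d : ℕ}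
    (hu : u ≡ 1 [SMOD Ideal.span {(X : R⟦X⟧) ^ t}]) (hne : d ≠ e) (hlt : d < e + t) :
    coeff d (X ^ e * u) = 0 := by
  rw [coeff_X_pow_mul']
  split_ifs with h
  · rw [coeff_eq_of_smodEq hu (by omega), coeff_one, if_neg (by omega)]
  · rfl

/-- The right side is Cauchy's product with `a = X^(4n+3)`, `b = 1`, `q = X^4`: the exponents
`|4l - 4n - 3|` run through the odd numbers below `4n + 4`. -/
theorem X_pow_mul_prod_one_add_X_pow (n : ℕ) :
    (X : R⟦X⟧) ^ (3 * (n + 1) * (2 * n + 1)) *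
        ∏ i ∈ range (n + 1), (1 + X ^ (4 * i + 1)) * (1 + X ^ (4 * i + 3)) =
      ∏ l ∈ range (2 * n + 2), (X ^ (4 * n + 3) + 1 * (X ^ 4) ^ l) := by
  have low : ∏ l ∈ range (n + 1), ((X : R⟦X⟧) ^ (4 * n + 3) + 1 * (X ^ 4) ^ l) =
      X ^ (2 * n * (n + 1)) * ∏ i ∈ range (n + 1), (1 + X ^ (4 * i + 3)) := by
    have hsum : ∑ i ∈ range (n + 1), 4 * (n - i) = 2 * n * (n + 1) := by
      have reflect := sum_range_reflect (fun i => i) (n + 1)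
      have gauss := sum_range_id_mul_two (n + 1)
      simp only [add_tsub_cancel_right] at reflect gauss
      rw [← mul_sum, reflect]
      linarith
    rw [← prod_range_reflect, ← hsum, ← prod_pow_eq_pow_sum, ← prod_mul_distrib]
    refine prod_congr rfl fun i hi => ?_
    rw [mem_range] at hi
    rw [one_mul, ← pow_mul, mul_one_add, ← pow_add, show n + 1 - 1 - i = n - i by omega,
      show 4 * (n - i) + (4 * i + 3) = 4 * n + 3 by omega, add_comm]
  have high : ∏ i ∈ range (n + 1), ((X : R⟦X⟧) ^ (4 * n + 3) + 1 * (X ^ 4) ^ (n + 1 + i)) =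
      X ^ ((4 * n + 3) * (n + 1)) * ∏ i ∈ range (n + 1), (1 + X ^ (4 * i + 1)) := by
    rw [pow_mul, ← card_range (n + 1), ← prod_const, card_range, ← prod_mul_distrib]
    refine prod_congr rfl fun i _ => ?_
    rw [one_mul, ← pow_mul, mul_one_add, ← pow_add]
    ring_nf
  rw [show 2 * n + 2 = (n + 1) + (n + 1) by ring,
    prod_range_add (fun l => (X : R⟦X⟧) ^ (4 * n + 3) + 1 * (X ^ 4) ^ l), low, high,
    prod_mul_distrib,
    show 3 * (n + 1) * (2 * n + 1) = 2 * n * (n + 1) + (4 * n + 3) * (n + 1) by ring, pow_add]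
  ring

theorem jacobi_exponent_ne_and_lt {n i j r : ℕ} (hij : i + j = 2 * n + 2) (hrn : r ≤ 4 * n + 4)
    (hr : ∀ s : ℤ, 2 * s ^ 2 - s ≠ r) :
    r + 3 * (n + 1) * (2 * n + 1) ≠ 4 * i.choose 2 + (4 * n + 3) * j ∧
      r + 3 * (n + 1) * (2 * n + 1) < 4 * i.choose 2 + (4 * n + 3) * j + (4 * min i j + 4) := by
  have hc : 2 * i.choose 2 + i = i * i := by
    clear hij
    induction i with
    | zero => rfl
    | succ i ih =>
      rw [Nat.choose_succ_succ', Nat.choose_one_right]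
      linarith
  set s : ℤ := i - (n + 1)
  have key :
      (4 * i.choose 2 + (4 * n + 3) * j : ℤ) = 3 * (n + 1) * (2 * n + 1) + (2 * s ^ 2 - s) := by
    have hc' : (2 * i.choose 2 + i : ℤ) = i * i := by exact_mod_cast hc
    have hij' : (i + j : ℤ) = 2 * n + 2 := by exact_mod_cast hij
    linear_combination 2 * hc' + (4 * n + 3 : ℤ) * hij'
  constructor
  · intro h
    apply hr s
    have h' : (r + 3 * (n + 1) * (2 * n + 1) : ℤ) = 4 * i.choose 2 + (4 * n + 3) * j := by
      exact_mod_cast h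
    linarith
  · zify
    have hij' : (i + j : ℤ) = 2 * n + 2 := by exact_mod_cast hij
    have hrn' : (r : ℤ) ≤ 4 * n + 4 := by exact_mod_cast hrn
    rcases le_total i j with hle | hle
    · rw [min_eq_left (by exact_mod_cast hle)]
      nlinarith [sq_nonneg (4 * s + 3)]
    · rw [min_eq_right (by exact_mod_cast hle)]
      nlinarith [sq_nonneg (4 * s - 5)]

theorem coeff_prod_jacobi_eq_zero {n r : ℕ} (hrn : r ≤ 4 * n + 4)
    (hr : ∀ s : ℤ, 2 * s ^ 2 - s ≠ r) :
    coeff r ((∏ i ∈ range (n + 1), (1 + X ^ (4 * i + 1)) * (1 + X ^ (4 * i + 3))) *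
      ∏ l ∈ range (2 * n + 2), (1 - (X ^ 4) ^ (l + 1)) : R⟦X⟧) = 0 := by
  rw [← coeff_X_pow_mul _ (3 * (n + 1) * (2 * n + 1)), ← mul_assoc, X_pow_mul_prod_one_add_X_pow,
    prod_add_mul_pow_eq_sum_qBinom, sum_mul, map_sum]
  refine sum_eq_zero fun ⟨i, j⟩ hij => ?_
  rw [HasAntidiagonal.mem_antidiagonal] at hij
  -- The term of index `(i, j)` is `X^e` times `qBinom (X^4) i j * ∏ (1 - X^(4(l+1)))`, which is `1`
  -- modulo `X^(4 min i j + 4)`; the target coefficient lies strictly inside that gap.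
  obtain ⟨hne, hlt⟩ := jacobi_exponent_ne_and_lt hij hrn hr
  have hu : qBinom (X ^ 4) i j * ∏ l ∈ range (2 * n + 2), (1 - (X ^ 4) ^ (l + 1)) ≡ 1
      [SMOD Ideal.span {(X : R⟦X⟧) ^ (4 * min i j + 4)}] := by
    rw [← hij, add_comm i j, prod_range_add, ← mul_assoc, qBinom_mul_prod_one_sub_pow]
    have h1 := prod_one_sub_X_pow_smodEq_one (R := R) (range j) (e := fun l => 4 * (i + l + 1))
      (t := 4 * min i j + 4) fun l _ => by omega
    have h2 := prod_one_sub_X_pow_smodEq_one (R := R) (range i) (e := fun l => 4 * (j + l + 1))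
      (t := 4 * min i j + 4) fun l _ => by omega
    simpa only [pow_mul, one_mul] using h1.mul h2
  convert coeff_X_pow_mul_eq_zero_of_smodEq_one hu hne hlt using 2
  rw [one_pow, mul_one, ← pow_mul, ← pow_mul, pow_add]
  ring

variable (R) in
/-- The `M`-th partial product of Ramanujan's `ψ(q) = ∏ (1 + q^k) (1 - q^(2k)) = ∑ q^(k(k+1)/2)`. -/
noncomputable def psiPartialProd (M : ℕ) : R⟦X⟧ :=
  ∏ k ∈ range M, (1 + X ^ (k + 1)) * (1 - X ^ (2 * (k + 1)))

theorem psiPartialProd_smodEq_of_le {M M' : ℕ} (h : M ≤ M') :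
    psiPartialProd R M' ≡ psiPartialProd R M [SMOD Ideal.span {(X : R⟦X⟧) ^ (M + 1)}] := by
  refine prod_range_smodEq_of_le _ (fun k hk => ?_) h
  rw [show ((1 : R⟦X⟧) + X ^ (k + 1)) * (1 - X ^ (2 * (k + 1))) =
      1 + X ^ (k + 1) * (1 - X ^ (k + 1) - X ^ (2 * (k + 1))) by rw [mul_comm 2, pow_mul]; ring]
  exact one_add_X_pow_mul_smodEq_one _ (by omega)

theorem psiPartialProd_two_mul_smodEq (m : ℕ) :
    psiPartialProd R (2 * m) ≡ ∏ i ∈ range m, (1 + X ^ (2 * i + 1)) * (1 - X ^ (4 * (i + 1)))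
      [SMOD Ideal.span {(X : R⟦X⟧) ^ (2 * m + 2)}] := by
  have htail := prod_range_smodEq_of_le (I := Ideal.span {(X : R⟦X⟧) ^ (2 * m + 2)})
    (fun k => 1 - X ^ (2 * (k + 1))) (fun k hk => one_sub_X_pow_smodEq_one (by omega))
    (show m ≤ 2 * m by omega)
  have regroup : (∏ i ∈ range m, ((1 : R⟦X⟧) + X ^ (2 * i + 1)) * (1 + X ^ (2 * i + 1 + 1))) *
      ∏ k ∈ range m, (1 - X ^ (2 * (k + 1))) =
        ∏ i ∈ range m, (1 + X ^ (2 * i + 1)) * (1 - X ^ (4 * (i + 1))) := by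
    rw [← prod_mul_distrib]
    refine prod_congr rfl fun i _ => ?_
    rw [show 4 * (i + 1) = 2 * (i + 1) * 2 by ring, pow_mul _ (2 * (i + 1)) 2]
    ring
  rw [psiPartialProd, prod_mul_distrib, prod_range_two_mul (fun k => (1 : R⟦X⟧) + X ^ (k + 1)),
    ← regroup]
  exact SModEq.rfl.mul htail

theorem coeff_psiPartialProd_eq_zero {M r : ℕ} (hrM : r < M) (hr : ∀ s : ℤ, 2 * s ^ 2 - s ≠ r) :
    coeff r (psiPartialProd R M) = 0 := by
  have h1 := psiPartialProd_smodEq_of_le (R := R) (show M ≤ 2 * (2 * M + 2) by omega)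
  have h2 := psiPartialProd_two_mul_smodEq (R := R) (2 * M + 2)
  rw [← coeff_eq_of_smodEq h1 (by omega), coeff_eq_of_smodEq h2 (by omega)]
  convert coeff_prod_jacobi_eq_zero (R := R) (n := M) (by omega) hr using 2
  rw [prod_mul_distrib, show 2 * M + 2 = 2 * (M + 1) by ring,
    prod_range_two_mul (fun i => (1 : R⟦X⟧) + X ^ (2 * i + 1))]
  congr 1
  · ring_nf
  · simp only [← pow_mul]

theorem two_mul_sq_sub_ne_of_mod_three {r : ℕ} (hr : r % 3 = 2) (s : ℤ) : 2 * s ^ 2 - s ≠ r := by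
  intro h
  have h' := congrArg (Int.cast : ℤ → ZMod 3) h
  rw [Int.cast_natCast, ← ZMod.natCast_mod, hr] at h'
  push_cast at h'
  generalize (s : ZMod 3) = x at h'
  revert x
  decide

theorem coeff_mul_expand_eq_zero {p : ℕ} (hp : p ≠ 0) (f g : R⟦X⟧) {N : ℕ}
    (hf : ∀ i ≤ N, i % p = N % p → coeff i f = 0) : coeff N (f * expand p hp g) = 0 := by
  rw [coeff_mul]
  refine sum_eq_zero fun ⟨i, j⟩ hij => ?_
  rw [HasAntidiagonal.mem_antidiagonal] at hij
  by_cases hj : p ∣ j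
  · obtain ⟨c, rfl⟩ := hj
    rw [hf i (by omega) (by simp [← hij]), zero_mul]
  · rw [coeff_expand_of_not_dvd p hp g hj, mul_zero]

theorem one_add_sq_mul_sq_eq_of_three_eq_zero {x g h : R} (h3 : (3 : R) = 0) (hg : (1 - x) * g = 1)
    (hh : (1 - x ^ 3) * h = 1) : (1 + x) ^ 2 * g ^ 2 = (1 + x) * (1 - x ^ 2) * h := by
  -- `(1 - x)^3 = 1 - x^3 - 3x(1 - x)`, so `g^3` is also an inverse of `1 - x^3`.
  have hcube : h = g ^ 3 := by
    linear_combination (-h * (1 + (1 - x) * g + ((1 - x) * g) ^ 2)) * hg + g ^ 3 * hh -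
      (x * (1 - x) * h * g ^ 3) * h3
  rw [hcube]
  linear_combination (-(1 + x) ^ 2 * g ^ 2) * hg

theorem prod_one_add_sq_mul_sq_eq_psiPartialProd_mul_expand (h3 : (3 : R) = 0)
    (g : ℕ → R⟦X⟧) (hg : ∀ k, (1 - X ^ (k + 1)) * g k = 1) (M : ℕ) :
    ∏ k ∈ range M, (1 + X ^ (k + 1)) ^ 2 * g k ^ 2 =
      psiPartialProd R M * expand 3 three_ne_zero (∏ k ∈ range M, g k) := by
  rw [psiPartialProd, map_prod, ← prod_mul_distrib]
  refine prod_congr rfl fun k _ => ?_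
  have hg3 : (1 - (X ^ (k + 1)) ^ 3) * expand 3 three_ne_zero (g k) = 1 := by
    simpa [← pow_mul, mul_comm] using congrArg (expand 3 three_ne_zero) (hg k)
  rw [mul_comm 2, pow_mul]
  exact one_add_sq_mul_sq_eq_of_three_eq_zero (by rw [← map_ofNat C 3, h3, map_zero]) (hg k) hg3

theorem coeff_prod_one_add_sq_mul_sq_eq_zero (h3 : (3 : R) = 0) (g : ℕ → R⟦X⟧)
    (hg : ∀ k, (1 - X ^ (k + 1)) * g k = 1) {M N : ℕ} (hNM : N < M) (hN : N % 3 = 2) :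
    coeff N (∏ k ∈ range M, (1 + X ^ (k + 1)) ^ 2 * g k ^ 2) = 0 := by
  rw [prod_one_add_sq_mul_sq_eq_psiPartialProd_mul_expand h3 g hg]
  exact coeff_mul_expand_eq_zero _ _ _ fun i hi hiN =>
    coeff_psiPartialProd_eq_zero (by omega) (two_mul_sq_sub_ne_of_mod_three (by omega))

theorem ppbar_3n2_mod3 (n : ℕ) : ∃ m : ℤ, ppbar (3 * n + 2) = 3 * m := by
  set N := 3 * n + 2
  -- `P` is an integral series whose image in `ℚ⟦X⟧` is the product defining `ppbar N`.
  set g : ℕ → ℤ⟦X⟧ := fun k => invOfUnit (1 - X ^ (k + 1)) 1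
  have hg : ∀ k, (1 - X ^ (k + 1)) * g k = 1 := fun k => mul_invOfUnit _ _ (by simp)
  set P : ℤ⟦X⟧ := ∏ k ∈ range (N + 1), (1 + X ^ (k + 1)) ^ 2 * g k ^ 2
  have hmap : ∀ {S : Type} [CommRing S] (f : ℤ →+* S),
      (∀ k, (1 - X ^ (k + 1)) * map f (g k) = 1) ∧
        map f P = ∏ k ∈ range (N + 1), (1 + X ^ (k + 1)) ^ 2 * map f (g k) ^ 2 :=
    fun f => ⟨fun k => by simpa using congrArg (map f) (hg k), by simp [P, map_prod]⟩
  have hQ : ppbar N = ((coeff N P : ℤ) : ℚ) := by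
    rw [ppbar, ← eq_intCast (Int.castRingHom ℚ), ← coeff_map, (hmap _).2]
    refine congrArg _ (prod_congr rfl fun k _ => ?_)
    have hinv : (1 - X ^ (k + 1) : ℚ⟦X⟧)⁻¹ = map (Int.castRingHom ℚ) (g k) :=
      (PowerSeries.inv_eq_iff_mul_eq_one (by simp)).2 (by rw [mul_comm]; exact (hmap _).1 k)
    rw [hinv]
  have h3 : ((coeff N P : ℤ) : ZMod 3) = 0 := by
    rw [← eq_intCast (Int.castRingHom _), ← coeff_map, (hmap _).2]
    exact coeff_prod_one_add_sq_mul_sq_eq_zero (by decide) _ (hmap _).1 (lt_add_one N) (by omega)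
  obtain ⟨m, hm⟩ := (ZMod.intCast_zmod_eq_zero_iff_dvd _ 3).1 h3
  exact ⟨m, by rw [hQ, hm]; push_cast; ring⟩
end

section
/- For all n ≥ 0, pp̄(3n) ≡ (-1)^n · r₂(n) (mod 3), where r₂(n) is the number of representations of n as an ordered sum of two squares of integers. -/
open PowerSeries Finset

noncomputable def r2 (n : ℕ) : ℕ := Set.ncard {p : ℤ × ℤ | p.1 ^ 2 + p.2 ^ 2 = (n : ℤ)}

/-!
Gauss's identity `∏ₖ (1 - qᵏ)/(1 + qᵏ) = θ := ∑_{x ∈ ℤ} (-1)ˣ q^{x²}` shows that the generating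
function of `pp̄` is `θ⁻²`. In characteristic 3 we have `θ⁻² = θ⁻³ θ = σ(q³) θ` with `σ = θ⁻¹`,
and since `3 ∣ x²` forces `9 ∣ x²`, the terms of `θ` with exponent divisible by 3 form
`θ(q⁹) = θ(q³)³`. Hence the coefficient of `q³ⁿ` in `θ⁻²` is that of `qⁿ` in `σ θ³ = θ²`,
namely `(-1)ⁿ r₂(n)`.

Gauss's identity is proved in truncated form. The `q`-binomial theorem
`∏_{i<N} (Y + q^{2i+1}) = ∑ₛ q^{(N-s)²} [N, s]_{q²} Yˢ` at `Y = -q^{2m}` gives the finite Jacobi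
triple product `(q; q²)ₘ² = ∑_{|j| ≤ m} (-1)ʲ q^{j²} [2m, m+j]_{q²}`, and
`[2m, m+j]_{q²} (q²; q²)ₘ ≡ 1` modulo `q^{2(m-|j|)+2}`, so that
`(q; q²)ₘ² (q²; q²)ₘ ≡ θ` modulo `q^{2m+1}`.
-/

namespace PPBar

section QBinomial

variable {A : Type*} [CommRing A]

def qPochhammer (Q : A) (n : ℕ) : A := ∏ i ∈ range n, (1 - Q ^ (i + 1))

def qBinom (Q : A) : ℕ → ℕ → A
  | _, 0 => 1
  | 0, _ + 1 => 0
  | n + 1, k + 1 => qBinom Q n k + Q ^ (k + 1) * qBinom Q n (k + 1)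

variable (Q : A)

@[simp] theorem qBinom_zero_right (n : ℕ) : qBinom Q n 0 = 1 := by cases n <;> rfl

theorem qBinom_succ_succ (n k : ℕ) :
    qBinom Q (n + 1) (k + 1) = qBinom Q n k + Q ^ (k + 1) * qBinom Q n (k + 1) := rfl

theorem qBinom_eq_zero_of_lt {n k : ℕ} (h : n < k) : qBinom Q n k = 0 := by
  induction n generalizing k with
  | zero => obtain ⟨k, rfl⟩ := Nat.exists_eq_succ_of_ne_zero (by omega : k ≠ 0); rfl
  | succ n ih =>
    obtain ⟨k, rfl⟩ := Nat.exists_eq_succ_of_ne_zero (by omega : k ≠ 0)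
    rw [qBinom_succ_succ, ih (by omega), ih (by omega), mul_zero, add_zero]

theorem qPochhammer_succ (n : ℕ) :
    qPochhammer Q (n + 1) = qPochhammer Q n * (1 - Q ^ (n + 1)) :=
  prod_range_succ _ n

theorem qPochhammer_add (a k : ℕ) :
    qPochhammer Q (a + k) = qPochhammer Q a * ∏ i ∈ range k, (1 - Q ^ (a + i + 1)) :=
  prod_range_add _ a k

theorem qBinom_mul_qPochhammer_mul_qPochhammer {n k : ℕ} (h : k ≤ n) :
    qBinom Q n k * qPochhammer Q k * qPochhammer Q (n - k) = qPochhammer Q n := by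
  induction n generalizing k with
  | zero =>
    obtain rfl : k = 0 := by omega
    simp [qPochhammer]
  | succ n ih =>
    cases k with
    | zero => simp [qPochhammer]
    | succ k =>
      rw [qBinom_succ_succ, qPochhammer_succ, qPochhammer_succ _ n, Nat.add_sub_add_right]
      obtain rfl | hk := (show k = n ∨ k < n by omega)
      · rw [qBinom_eq_zero_of_lt Q (Nat.lt_succ_self k)]
        linear_combination (1 - Q ^ (k + 1)) * ih (k := k) le_rfl
      · have hsub : n - k = n - (k + 1) + 1 := by omega
        have hpow : Q ^ (k + 1) * Q ^ (n - (k + 1) + 1) = Q ^ (n + 1) := by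
          rw [← pow_add]; congr 1; omega
        have h1 := ih (k := k) hk.le
        have h2 := ih (k := k + 1) hk
        rw [hsub, qPochhammer_succ] at h1 ⊢
        rw [qPochhammer_succ] at h2
        linear_combination (1 - Q ^ (k + 1)) * h1
          + Q ^ (k + 1) * (1 - Q ^ (n - (k + 1) + 1)) * h2 - qPochhammer Q n * hpow

/-- The `q`-binomial theorem. -/
theorem coeff_prod_X_add_C_odd_pow (q : A) (N s : ℕ) :
    (∏ i ∈ range N, (Polynomial.X + Polynomial.C (q ^ (2 * i + 1)))).coeff s =
      q ^ ((N - s) ^ 2) * qBinom (q ^ 2) N s := by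
  induction N generalizing s with
  | zero => cases s <;> simp [qBinom, Polynomial.coeff_one]
  | succ N ih =>
    rw [prod_range_succ, mul_add, Polynomial.coeff_add, Polynomial.coeff_mul_C]
    cases s with
    | zero =>
      rw [Polynomial.coeff_mul_X_zero, ih, qBinom_zero_right, qBinom_zero_right, Nat.sub_zero,
        Nat.sub_zero, zero_add, mul_one, mul_one, ← pow_add]
      ring_nf
    | succ s =>
      rw [Polynomial.coeff_mul_X, ih, ih, qBinom_succ_succ, Nat.add_sub_add_right]
      rcases lt_or_ge N (s + 1) with hN | hN
      · rw [qBinom_eq_zero_of_lt _ hN]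
        ring
      · have hpow : q ^ ((N - (s + 1)) ^ 2) * q ^ (2 * N + 1) =
            q ^ ((N - s) ^ 2) * (q ^ 2) ^ (s + 1) := by
          obtain ⟨t, rfl⟩ := Nat.exists_eq_add_of_le hN
          rw [← pow_add, ← pow_mul, ← pow_add, show s + 1 + t - (s + 1) = t by omega,
            show s + 1 + t - s = t + 1 by omega]
          ring_nf
        linear_combination qBinom (q ^ 2) N (s + 1) * hpow

theorem prod_odd_pow_sub_eq_sum (q : A) (m : ℕ) :
    ∏ i ∈ range (2 * m), (q ^ (2 * i + 1) - q ^ (2 * m)) =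
      ∑ s ∈ range (2 * m + 1),
        q ^ ((2 * m - s) ^ 2) * qBinom (q ^ 2) (2 * m) s * (-q ^ (2 * m)) ^ s := by
  set P := ∏ i ∈ range (2 * m), (Polynomial.X + Polynomial.C (q ^ (2 * i + 1)))
  have hdeg : P.natDegree < 2 * m + 1 := by
    refine Nat.lt_succ_of_le (Polynomial.natDegree_le_iff_coeff_eq_zero.mpr fun s hs => ?_)
    rw [coeff_prod_X_add_C_odd_pow, qBinom_eq_zero_of_lt _ hs, mul_zero]
  have heval := Polynomial.eval_eq_sum_range' hdeg (-q ^ (2 * m))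
  simp only [P, Polynomial.eval_prod, Polynomial.eval_add, Polynomial.eval_X, Polynomial.eval_C,
    coeff_prod_X_add_C_odd_pow] at heval
  rw [← heval]
  exact prod_congr rfl fun i _ => by ring

theorem sum_range_two_mul_add_one (m : ℕ) : ∑ i ∈ range m, (2 * i + 1) = m ^ 2 := by
  induction m with
  | zero => rfl
  | succ m ih => rw [sum_range_succ, ih]; ring

theorem prod_odd_pow_sub_eq (q : A) (m : ℕ) :
    ∏ i ∈ range (2 * m), (q ^ (2 * i + 1) - q ^ (2 * m)) =
      (-1) ^ m * q ^ (3 * m ^ 2) * (∏ i ∈ range m, (1 - q ^ (2 * i + 1))) ^ 2 := by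
  have hlow : ∏ i ∈ range m, (q ^ (2 * i + 1) - q ^ (2 * m)) =
      q ^ (m ^ 2) * ∏ i ∈ range m, (1 - q ^ (2 * i + 1)) := by
    rw [← prod_range_reflect (fun i => 1 - q ^ (2 * i + 1)), ← sum_range_two_mul_add_one,
      ← prod_pow_eq_pow_sum, ← prod_mul_distrib]
    refine prod_congr rfl fun i hi => ?_
    have : 2 * m = (2 * i + 1) + (2 * (m - 1 - i) + 1) := by
      have := mem_range.mp hi; omega
    rw [this, pow_add]; ring
  have hhigh : ∏ i ∈ range m, (q ^ (2 * (m + i) + 1) - q ^ (2 * m)) =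
      (-q ^ (2 * m)) ^ m * ∏ i ∈ range m, (1 - q ^ (2 * i + 1)) := by
    rw [show (-q ^ (2 * m)) ^ m = ∏ _i ∈ range m, -q ^ (2 * m) by simp, ← prod_mul_distrib]
    refine prod_congr rfl fun i _ => ?_
    rw [show 2 * (m + i) + 1 = 2 * m + (2 * i + 1) by ring, pow_add]; ring
  rw [two_mul, prod_range_add, ← two_mul, hlow, hhigh, neg_pow, ← pow_mul]
  ring_nf

end QBinomial

theorem prod_range_two_mul {M : Type*} [CommMonoid M] (f : ℕ → M) (m : ℕ) :
    ∏ k ∈ range (2 * m), f k = (∏ i ∈ range m, f (2 * i)) * ∏ i ∈ range m, f (2 * i + 1) := by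
  induction m with
  | zero => simp
  | succ m ih =>
    rw [show 2 * (m + 1) = 2 * m + 1 + 1 by ring, prod_range_succ, prod_range_succ, ih,
      prod_range_succ, prod_range_succ, mul_assoc, mul_mul_mul_comm]

theorem prod_range_smodEq_prod_range {A : Type*} [CommRing A] {I : Ideal A} {f : ℕ → A}
    {N M : ℕ} (hf : ∀ k, N ≤ k → f k ≡ 1 [SMOD I]) (h : N ≤ M) :
    ∏ k ∈ range M, f k ≡ ∏ k ∈ range N, f k [SMOD I] := by
  obtain ⟨t, rfl⟩ := Nat.exists_eq_add_of_le h
  rw [prod_range_add]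
  simpa using SModEq.rfl.mul (SModEq.prod fun i _ => hf (N + i) (Nat.le_add_right N i))

section XAdic

variable {R : Type*} [CommRing R]

theorem smodEq_X_pow_iff_coeff {K : ℕ} {f g : R⟦X⟧} :
    f ≡ g [SMOD Ideal.span {(X : R⟦X⟧) ^ K}] ↔ ∀ m < K, coeff m f = coeff m g := by
  simp only [SModEq.sub_mem, Ideal.mem_span_singleton, X_pow_dvd_iff, map_sub, sub_eq_zero]

theorem smodEq_X_pow_of_le {K L : ℕ} {f g : R⟦X⟧}
    (h : f ≡ g [SMOD Ideal.span {(X : R⟦X⟧) ^ K}]) (hLK : L ≤ K) :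
    f ≡ g [SMOD Ideal.span {(X : R⟦X⟧) ^ L}] :=
  h.mono (Ideal.span_singleton_le_span_singleton.mpr (pow_dvd_pow X hLK))

theorem X_pow_mul_smodEq_X_pow_mul {K : ℕ} {f g : R⟦X⟧}
    (h : f ≡ g [SMOD Ideal.span {(X : R⟦X⟧) ^ K}]) (e : ℕ) :
    X ^ e * f ≡ X ^ e * g [SMOD Ideal.span {(X : R⟦X⟧) ^ (e + K)}] := by
  rw [SModEq.sub_mem, Ideal.mem_span_singleton] at h ⊢
  rw [← mul_sub, pow_add]
  exact mul_dvd_mul_left _ h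

theorem X_pow_smodEq_zero {K e : ℕ} (h : K ≤ e) :
    (X : R⟦X⟧) ^ e ≡ 0 [SMOD Ideal.span {(X : R⟦X⟧) ^ K}] :=
  SModEq.zero.mpr (Ideal.mem_span_singleton.mpr (pow_dvd_pow X h))

theorem one_sub_X_pow_smodEq_one {K e : ℕ} (h : K ≤ e) :
    1 - (X : R⟦X⟧) ^ e ≡ 1 [SMOD Ideal.span {(X : R⟦X⟧) ^ K}] := by
  simpa using (SModEq.refl (1 : R⟦X⟧)).sub (X_pow_smodEq_zero h)

theorem one_add_X_pow_smodEq_one {K e : ℕ} (h : K ≤ e) :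
    1 + (X : R⟦X⟧) ^ e ≡ 1 [SMOD Ideal.span {(X : R⟦X⟧) ^ K}] := by
  simpa using (SModEq.refl (1 : R⟦X⟧)).add (X_pow_smodEq_zero h)

theorem isUnit_qPochhammer {Q : R⟦X⟧} (hQ : constantCoeff Q = 0) (n : ℕ) :
    IsUnit (qPochhammer Q n) := by
  simp [isUnit_iff_constantCoeff, qPochhammer, hQ]

theorem prod_one_sub_X_sq_pow_smodEq_one (a k : ℕ) :
    ∏ i ∈ range k, (1 - ((X : R⟦X⟧) ^ 2) ^ (a + i + 1)) ≡ 1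
      [SMOD Ideal.span {(X : R⟦X⟧) ^ (2 * a + 2)}] := by
  simpa using SModEq.prod fun i (_ : i ∈ range k) =>
    (pow_mul (X : R⟦X⟧) 2 _ ▸ one_sub_X_pow_smodEq_one (by omega) :
      1 - ((X : R⟦X⟧) ^ 2) ^ (a + i + 1) ≡ 1 [SMOD Ideal.span {(X : R⟦X⟧) ^ (2 * a + 2)}])

theorem qBinom_mul_qPochhammer_smodEq_one {a b c s : ℕ} (hac : a ≤ c) (hab : a ≤ b)
    (hs : s = a ∨ s = b) :
    qBinom ((X : R⟦X⟧) ^ 2) (a + b) s * qPochhammer (X ^ 2) c ≡ 1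
      [SMOD Ideal.span {(X : R⟦X⟧) ^ (2 * a + 2)}] := by
  set Q : R⟦X⟧ := X ^ 2
  have hprod :
      qBinom Q (a + b) s * (qPochhammer Q a * qPochhammer Q b) = qPochhammer Q (a + b) := by
    rcases hs with rfl | rfl
    · rw [← mul_assoc, ← qBinom_mul_qPochhammer_mul_qPochhammer Q (Nat.le_add_right s b),
        Nat.add_sub_cancel_left]
    · rw [mul_comm (qPochhammer Q a), ← mul_assoc,
        ← qBinom_mul_qPochhammer_mul_qPochhammer Q (Nat.le_add_left s a), Nat.add_sub_cancel]
  obtain ⟨t, rfl⟩ := Nat.exists_eq_add_of_le hac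
  have hunit : IsUnit (qPochhammer Q a * qPochhammer Q b) :=
    (isUnit_qPochhammer (by simp [Q]) a).mul (isUnit_qPochhammer (by simp [Q]) b)
  have hsplit : qBinom Q (a + b) s * qPochhammer Q (a + t) =
      (∏ i ∈ range a, (1 - Q ^ (b + i + 1))) * ∏ i ∈ range t, (1 - Q ^ (a + i + 1)) := by
    refine hunit.mul_left_cancel ?_
    rw [add_comm a b] at hprod ⊢
    rw [qPochhammer_add Q b a] at hprod
    rw [qPochhammer_add Q a t]
    linear_combination (qPochhammer Q a * ∏ i ∈ range t, (1 - Q ^ (a + i + 1))) * hprod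
  have h1 : ∏ i ∈ range a, (1 - Q ^ (b + i + 1)) ≡ 1
      [SMOD Ideal.span {(X : R⟦X⟧) ^ (2 * a + 2)}] :=
    smodEq_X_pow_of_le (prod_one_sub_X_sq_pow_smodEq_one b a) (by omega)
  have h2 : ∏ i ∈ range t, (1 - Q ^ (a + i + 1)) ≡ 1
      [SMOD Ideal.span {(X : R⟦X⟧) ^ (2 * a + 2)}] :=
    prod_one_sub_X_sq_pow_smodEq_one a t
  rw [hsplit]
  simpa only [mul_one] using h1.mul h2

end XAdic

section Theta

variable {R : Type*} [CommRing R]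

noncomputable def sqRoots (r : ℕ) : Finset ℤ := (Icc (-(r : ℤ)) r).filter (· ^ 2 = (r : ℤ))

theorem mem_sqRoots {r : ℕ} {x : ℤ} : x ∈ sqRoots r ↔ x ^ 2 = r := by
  simp only [sqRoots, mem_filter, mem_Icc, and_iff_right_iff_imp]
  intro h
  constructor <;> nlinarith

-- `∑_{x ∈ ℤ} (-1)ˣ X^{x²}`: the roots of `x² = r` all have the parity of `r`.
variable (R) in
noncomputable def theta : R⟦X⟧ := mk fun r => (-1) ^ r * ((sqRoots r).card : R)

theorem coeff_theta (r : ℕ) : coeff r (theta R) = (-1) ^ r * ((sqRoots r).card : R) :=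
  coeff_mk _ _

theorem constantCoeff_theta : constantCoeff (theta R) = 1 := by
  have : sqRoots 0 = {0} := by ext x; simp [mem_sqRoots]
  rw [← coeff_zero_eq_constantCoeff_apply, coeff_theta, this]
  simp

theorem r2_eq_sum (n : ℕ) :
    r2 n = ∑ ab ∈ antidiagonal n, (sqRoots ab.1).card * (sqRoots ab.2).card := by
  have hset : {p : ℤ × ℤ | p.1 ^ 2 + p.2 ^ 2 = (n : ℤ)} =
      ↑((antidiagonal n).biUnion fun ab => sqRoots ab.1 ×ˢ sqRoots ab.2) := by
    ext ⟨x, y⟩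
    simp only [Set.mem_ofPred_eq, coe_biUnion, mem_coe, mem_product, mem_sqRoots, Set.mem_iUnion,
      exists_prop, HasAntidiagonal.mem_antidiagonal, Prod.exists]
    constructor
    · intro h
      refine ⟨x.natAbs ^ 2, y.natAbs ^ 2, ?_, ?_, ?_⟩
      · zify; rwa [sq_abs, sq_abs]
      · push_cast; exact (sq_abs x).symm
      · push_cast; exact (sq_abs y).symm
    · rintro ⟨a, b, hab, hx, hy⟩
      rw [hx, hy, ← hab]; push_cast; rfl
  rw [r2, hset, Set.ncard_coe_finset, card_biUnion]
  · exact sum_congr rfl fun ab _ => card_product _ _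
  · intro ab _ ab' _ hne
    refine disjoint_left.mpr fun p hp hp' => hne ?_
    simp only [mem_product, mem_sqRoots] at hp hp'
    ext
    · exact_mod_cast hp.1.symm.trans hp'.1
    · exact_mod_cast hp.2.symm.trans hp'.2

theorem coeff_theta_sq (n : ℕ) : coeff n (theta R ^ 2) = (-1) ^ n * (r2 n : R) := by
  rw [sq, coeff_mul, r2_eq_sum, Nat.cast_sum, mul_sum]
  refine sum_congr rfl fun ⟨a, b⟩ hab => ?_
  rw [HasAntidiagonal.mem_antidiagonal] at hab
  rw [coeff_theta, coeff_theta, ← hab, pow_add]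
  push_cast
  ring

theorem three_dvd_of_sq_eq_three_mul {x : ℤ} {j : ℕ} (hx : x ^ 2 = (3 * j : ℕ)) : (3 : ℤ) ∣ x :=
  Int.prime_three.dvd_of_dvd_pow (n := 2) ⟨j, by rw [hx]; push_cast; ring⟩

theorem sqRoots_three_mul_of_not_dvd {j : ℕ} (hj : ¬ 3 ∣ j) : sqRoots (3 * j) = ∅ := by
  refine eq_empty_of_forall_notMem fun x hx => hj ?_
  rw [mem_sqRoots] at hx
  obtain ⟨y, rfl⟩ := three_dvd_of_sq_eq_three_mul hx
  push_cast at hx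
  ring_nf at hx
  exact Int.natCast_dvd_natCast.mp ⟨y ^ 2, by push_cast; linarith⟩

theorem card_sqRoots_nine_mul (u : ℕ) : (sqRoots (9 * u)).card = (sqRoots u).card := by
  have : sqRoots (9 * u) = (sqRoots u).image (3 * ·) := by
    ext x
    simp only [mem_image, mem_sqRoots]
    constructor
    · intro hx
      obtain ⟨y, rfl⟩ := three_dvd_of_sq_eq_three_mul (j := 3 * u) (by rw [hx]; ring_nf)
      exact ⟨y, by push_cast at hx; linarith, rfl⟩
    · rintro ⟨y, hy, rfl⟩
      push_cast; rw [← hy]; ring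
  rw [this, card_image_of_injective _ (mul_right_injective₀ three_ne_zero)]

theorem coeff_theta_three_mul (j : ℕ) :
    coeff (3 * j) (theta R) = coeff j (expand 3 three_ne_zero (theta R)) := by
  rw [coeff_expand, coeff_theta]
  split_ifs with h
  · obtain ⟨u, rfl⟩ := h
    rw [Nat.mul_div_cancel_left _ three_pos, coeff_theta, ← mul_assoc, show 3 * 3 = 9 by rfl,
      card_sqRoots_nine_mul, pow_mul]
    norm_num
  · simp [sqRoots_three_mul_of_not_dvd h]

end Theta

section Gauss

variable {R : Type*} [CommRing R]

-- The finite Jacobi triple product at `z = -1`: the `q`-binomial theorem at `Y = -X^{2m}`,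
-- divided by `X^{3m²}`.
theorem neg_one_pow_mul_prod_sq_eq_sum (m : ℕ) :
    (-1) ^ m * (∏ i ∈ range m, (1 - (X : R⟦X⟧) ^ (2 * i + 1))) ^ 2 =
      ∑ s ∈ range (2 * m + 1),
        (-1) ^ s * X ^ (((s : ℤ) - m).natAbs ^ 2) * qBinom (X ^ 2) (2 * m) s := by
  apply X_pow_mul_cancel (k := 3 * m ^ 2)
  calc X ^ (3 * m ^ 2) * ((-1) ^ m * (∏ i ∈ range m, (1 - (X : R⟦X⟧) ^ (2 * i + 1))) ^ 2)
      = ∏ i ∈ range (2 * m), (X ^ (2 * i + 1) - X ^ (2 * m)) := by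
        rw [prod_odd_pow_sub_eq]; ring
    _ = _ := by
      rw [prod_odd_pow_sub_eq_sum, mul_sum]
      refine sum_congr rfl fun s hs => ?_
      have hexp : (2 * m - s) ^ 2 + 2 * m * s = 3 * m ^ 2 + ((s : ℤ) - m).natAbs ^ 2 := by
        have := mem_range.mp hs
        zify [show s ≤ 2 * m by omega]
        rw [sq_abs]
        ring
      rw [neg_pow, ← pow_mul, mul_comm ((-1 : R⟦X⟧) ^ s), ← mul_assoc,
        mul_right_comm _ _ (X ^ _), ← pow_add, hexp, pow_add]
      ring

theorem X_pow_mul_qBinom_mul_qPochhammer_smodEq {m s : ℕ} (hs : s ≤ 2 * m) :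
    X ^ (((s : ℤ) - m).natAbs ^ 2) *
        (qBinom ((X : R⟦X⟧) ^ 2) (2 * m) s * qPochhammer (X ^ 2) m) ≡
      X ^ (((s : ℤ) - m).natAbs ^ 2) [SMOD Ideal.span {(X : R⟦X⟧) ^ (2 * m + 1)}] := by
  set d := ((s : ℤ) - m).natAbs
  have h := qBinom_mul_qPochhammer_smodEq_one (R := R) (a := m - d) (b := m + d) (c := m)
    (s := s) (by omega) (by omega) (by omega)
  rw [show m - d + (m + d) = 2 * m by omega] at h
  have hd : 2 * d ≤ d ^ 2 + 1 := by nlinarith [sq_nonneg ((d : ℤ) - 1)]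
  simpa only [mul_one] using smodEq_X_pow_of_le (X_pow_mul_smodEq_X_pow_mul h (d ^ 2)) (by omega)

theorem prod_sq_mul_qPochhammer_smodEq (m : ℕ) :
    (∏ i ∈ range m, (1 - (X : R⟦X⟧) ^ (2 * i + 1))) ^ 2 * qPochhammer (X ^ 2) m ≡
      ∑ s ∈ range (2 * m + 1), (-1) ^ (s + m) * X ^ (((s : ℤ) - m).natAbs ^ 2)
      [SMOD Ideal.span {(X : R⟦X⟧) ^ (2 * m + 1)}] := by
  set odd := ∏ i ∈ range m, (1 - (X : R⟦X⟧) ^ (2 * i + 1))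
  have hsign : ((-1 : R⟦X⟧) ^ m) ^ 2 = 1 := by rw [← pow_mul, pow_mul', neg_one_sq, one_pow]
  rw [show odd ^ 2 * qPochhammer (X ^ 2) m =
      (-1) ^ m * odd ^ 2 * ((-1) ^ m * qPochhammer (X ^ 2) m) by
    linear_combination (-odd ^ 2 * qPochhammer (X ^ 2) m) * hsign,
    neg_one_pow_mul_prod_sq_eq_sum, sum_mul]
  refine SModEq.sum fun s hs => ?_
  have h := X_pow_mul_qBinom_mul_qPochhammer_smodEq (R := R)
    (Nat.lt_succ_iff.mp (mem_range.mp hs))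
  have hassoc : ∀ a b c : R⟦X⟧,
      (-1) ^ s * a * b * ((-1) ^ m * c) = (-1) ^ (s + m) * (a * (b * c)) :=
    fun _ _ _ => by ring
  rw [hassoc]
  exact (SModEq.refl _).mul h

theorem neg_one_pow_natAbs_sq (x : ℤ) : (-1 : R) ^ (x.natAbs ^ 2) = (-1) ^ x.natAbs := by
  rcases Nat.even_or_odd x.natAbs with h | h
  · rw [h.neg_one_pow, (h.pow_of_ne_zero two_ne_zero).neg_one_pow]
  · rw [h.neg_one_pow, h.pow.neg_one_pow]

theorem card_filter_natAbs_sq_eq {m r : ℕ} (hr : r < (m + 1) ^ 2) :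
    ((range (2 * m + 1)).filter fun s : ℕ => ((s : ℤ) - m).natAbs ^ 2 = r).card =
      (sqRoots r).card := by
  have hbound : ∀ x ∈ sqRoots r, -(m : ℤ) ≤ x ∧ x ≤ m := by
    intro x hx
    rw [mem_sqRoots] at hx
    have : x ^ 2 < ((m : ℤ) + 1) ^ 2 := by rw [hx]; exact_mod_cast hr
    constructor <;> nlinarith
  refine card_nbij' (fun s => (s : ℤ) - m) (fun x => (x + m).toNat) ?_ ?_ ?_ ?_
  · intro s hs
    simp only [coe_filter, Set.mem_ofPred_eq] at hs
    rw [mem_coe, mem_sqRoots, ← Int.natAbs_sq, ← hs.2]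
    push_cast; rfl
  · intro x hx
    have hxm := hbound x hx
    rw [mem_coe, mem_sqRoots] at hx
    simp only [coe_filter, mem_range, Set.mem_ofPred_eq]
    refine ⟨by omega, ?_⟩
    rw [show ((x + m).toNat : ℤ) - m = x by omega]
    exact_mod_cast (Int.natAbs_sq x).trans hx
  · intro s _
    simp
  · intro x hx
    have hxm := hbound x hx
    simp only
    omega

theorem sum_neg_one_pow_X_pow_smodEq_theta (m : ℕ) :
    ∑ s ∈ range (2 * m + 1), (-1) ^ (s + m) * (X : R⟦X⟧) ^ (((s : ℤ) - m).natAbs ^ 2) ≡ theta R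
      [SMOD Ideal.span {(X : R⟦X⟧) ^ ((m + 1) ^ 2)}] := by
  refine smodEq_X_pow_iff_coeff.mpr fun r hr => ?_
  have hsign : ∀ s ∈ (range (2 * m + 1)).filter (fun s : ℕ => ((s : ℤ) - m).natAbs ^ 2 = r),
      (-1 : R) ^ (s + m) = (-1) ^ r := by
    intro s hs
    rw [← (mem_filter.mp hs).2, neg_one_pow_natAbs_sq, neg_one_pow_eq_pow_mod_two,
      neg_one_pow_eq_pow_mod_two (n := ((s : ℤ) - m).natAbs)]
    congr 1
    omega
  have hC : ∀ n, (-1 : R⟦X⟧) ^ n = C ((-1 : R) ^ n) := fun n => by simp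
  simp only [map_sum, hC, coeff_C_mul, coeff_X_pow, mul_ite, mul_one, mul_zero, ← sum_filter,
    eq_comm (a := r)]
  rw [sum_congr rfl hsign, sum_const, card_filter_natAbs_sq_eq hr, coeff_theta, nsmul_eq_mul,
    mul_comm]

theorem qPochhammer_X_two_mul (m : ℕ) :
    qPochhammer (X : R⟦X⟧) (2 * m) =
      (∏ i ∈ range m, (1 - X ^ (2 * i + 1))) * qPochhammer (X ^ 2) m := by
  rw [qPochhammer, prod_range_two_mul, qPochhammer]
  congr 1
  refine prod_congr rfl fun i _ => ?_
  rw [← pow_mul]; ring_nf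

theorem qPochhammer_X_mul_prod_one_add_X_pow (n : ℕ) :
    qPochhammer (X : R⟦X⟧) n * ∏ k ∈ range n, (1 + X ^ (k + 1)) = qPochhammer (X ^ 2) n := by
  rw [qPochhammer, qPochhammer, ← prod_mul_distrib]
  refine prod_congr rfl fun k _ => ?_
  rw [← pow_mul, mul_comm 2, pow_mul]; ring

theorem theta_mul_prod_one_add_X_pow_smodEq (N : ℕ) :
    theta R * ∏ k ∈ range N, (1 + X ^ (k + 1)) ≡ qPochhammer X N
      [SMOD Ideal.span {(X : R⟦X⟧) ^ (N + 1)}] := by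
  set odd := ∏ i ∈ range N, (1 - (X : R⟦X⟧) ^ (2 * i + 1))
  set tail := ∏ i ∈ range N, (1 - ((X : R⟦X⟧) ^ 2) ^ (N + i + 1))
  have hθ : theta R ≡ odd ^ 2 * qPochhammer (X ^ 2) N
      [SMOD Ideal.span {(X : R⟦X⟧) ^ (N + 1)}] :=
    (smodEq_X_pow_of_le (sum_neg_one_pow_X_pow_smodEq_theta N).symm (by nlinarith)).trans
      (smodEq_X_pow_of_le (prod_sq_mul_qPochhammer_smodEq N).symm (by omega))
  have hprod : odd ^ 2 * qPochhammer (X ^ 2) N * ∏ k ∈ range (2 * N), (1 + X ^ (k + 1)) =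
      qPochhammer X (2 * N) * tail := by
    have h1 := qPochhammer_X_two_mul (R := R) N
    have h2 := qPochhammer_X_mul_prod_one_add_X_pow (R := R) (2 * N)
    have h3 := qPochhammer_add ((X : R⟦X⟧) ^ 2) N N
    rw [← two_mul] at h3
    linear_combination (-odd * ∏ k ∈ range (2 * N), (1 + (X : R⟦X⟧) ^ (k + 1)) - tail) * h1
      + odd * h2 + odd * h3
  have htail : tail ≡ 1 [SMOD Ideal.span {(X : R⟦X⟧) ^ (N + 1)}] :=
    smodEq_X_pow_of_le (prod_one_sub_X_sq_pow_smodEq_one N N) (by omega)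
  have hplus : ∏ k ∈ range (2 * N), (1 + X ^ (k + 1)) ≡ ∏ k ∈ range N, (1 + X ^ (k + 1))
      [SMOD Ideal.span {(X : R⟦X⟧) ^ (N + 1)}] :=
    prod_range_smodEq_prod_range (fun _ hk => one_add_X_pow_smodEq_one (by omega)) (by omega)
  have hminus : qPochhammer X (2 * N) ≡ qPochhammer X N
      [SMOD Ideal.span {(X : R⟦X⟧) ^ (N + 1)}] :=
    prod_range_smodEq_prod_range (fun _ hk => one_sub_X_pow_smodEq_one (by omega)) (by omega)
  calc theta R * ∏ k ∈ range N, (1 + X ^ (k + 1))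
      ≡ odd ^ 2 * qPochhammer (X ^ 2) N * ∏ k ∈ range (2 * N), (1 + X ^ (k + 1))
        [SMOD Ideal.span {(X : R⟦X⟧) ^ (N + 1)}] := hθ.mul hplus.symm
    _ = qPochhammer X (2 * N) * tail := hprod
    _ ≡ qPochhammer X N * 1 [SMOD Ideal.span {(X : R⟦X⟧) ^ (N + 1)}] := hminus.mul htail
    _ = qPochhammer X N := mul_one _

end Gauss

section CharP

theorem coeff_mul_expand_mul_eq {R : Type*} [CommRing R] {p : ℕ} (hp : p ≠ 0) {g g' : R⟦X⟧}
    (h : ∀ j, coeff (p * j) g = coeff (p * j) g') (f : R⟦X⟧) (n : ℕ) :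
    coeff (p * n) (expand p hp f * g) = coeff (p * n) (expand p hp f * g') := by
  rw [coeff_mul, coeff_mul]
  refine sum_congr rfl fun ⟨a, b⟩ hab => ?_
  rw [HasAntidiagonal.mem_antidiagonal] at hab
  by_cases ha : p ∣ a
  · obtain ⟨i, rfl⟩ := ha
    obtain rfl : b = p * (n - i) := by rw [Nat.mul_sub, ← hab, Nat.add_sub_cancel_left]
    rw [h]
  · rw [coeff_expand_of_not_dvd p hp f ha, zero_mul, zero_mul]

variable {p : ℕ} [hp : Fact p.Prime]

theorem pow_eq_expand (f : (ZMod p)⟦X⟧) : f ^ p = expand p hp.out.ne_zero f := by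
  have := MvPowerSeries.map_frobenius_expand p hp.out.ne_zero (f := f)
  rw [ZMod.frobenius_zmod, MvPowerSeries.map_id] at this
  exact this.symm

theorem coeff_prime_mul_pow_pred_of_mul_eq_one {f g : (ZMod p)⟦X⟧} (hfg : f * g = 1)
    (hf : ∀ j, coeff (p * j) f = coeff j (f ^ p)) (n : ℕ) :
    coeff (p * n) (g ^ (p - 1)) = coeff n (f ^ (p - 1)) := by
  have hpow : ∀ h : (ZMod p)⟦X⟧, h ^ p = h ^ (p - 1) * h := fun h => by
    rw [← pow_succ, Nat.sub_add_cancel hp.out.one_lt.le]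
  calc coeff (p * n) (g ^ (p - 1))
      = coeff (p * n) (expand p hp.out.ne_zero g * f) := by
        rw [← pow_eq_expand, hpow g, mul_assoc, mul_comm g, hfg, mul_one]
    _ = coeff (p * n) (expand p hp.out.ne_zero g * expand p hp.out.ne_zero (f ^ p)) :=
        coeff_mul_expand_mul_eq _ (fun j => by rw [hf, coeff_expand_mul]) g n
    _ = coeff n (f ^ (p - 1)) := by
        rw [← map_mul, coeff_expand_mul, hpow f, mul_left_comm, mul_comm g, hfg, mul_one]

end CharP

section Ppbar

variable {K : Type*} [Field K]

theorem prod_smodEq_inv_theta_sq (N : ℕ) :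
    ∏ k ∈ range N, ((1 + X ^ (k + 1)) ^ 2 * ((1 - X ^ (k + 1))⁻¹) ^ 2) ≡ ((theta K)⁻¹) ^ 2
      [SMOD Ideal.span {(X : K⟦X⟧) ^ (N + 1)}] := by
  set P := ∏ k ∈ range N, (1 + (X : K⟦X⟧) ^ (k + 1))
  set Pinv := ∏ k ∈ range N, (1 - (X : K⟦X⟧) ^ (k + 1))⁻¹
  have hP : qPochhammer X N * Pinv = 1 := by
    rw [qPochhammer, ← prod_mul_distrib]
    exact prod_eq_one fun k _ => PowerSeries.mul_inv_cancel _ (by simp)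
  have hθ : theta K * (theta K)⁻¹ = 1 :=
    PowerSeries.mul_inv_cancel _ (by rw [constantCoeff_theta]; exact one_ne_zero)
  have hsplit : ∏ k ∈ range N, ((1 + X ^ (k + 1)) ^ 2 * ((1 - X ^ (k + 1))⁻¹) ^ 2) =
      (theta K * P) ^ 2 * Pinv ^ 2 * (theta K)⁻¹ ^ 2 := by
    rw [prod_mul_distrib, prod_pow, prod_pow]
    calc P ^ 2 * Pinv ^ 2 = P ^ 2 * Pinv ^ 2 * (theta K * (theta K)⁻¹) ^ 2 := by
          rw [hθ, one_pow, mul_one]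
      _ = _ := by ring
  have hcancel : qPochhammer X N ^ 2 * Pinv ^ 2 * (theta K)⁻¹ ^ 2 = (theta K)⁻¹ ^ 2 := by
    rw [← mul_pow, hP, one_pow, one_mul]
  have hgauss := (((theta_mul_prod_one_add_X_pow_smodEq (R := K) N).pow 2).mul
    (SModEq.refl (Pinv ^ 2))).mul (SModEq.refl ((theta K)⁻¹ ^ 2))
  rw [hcancel] at hgauss
  rwa [hsplit]

theorem coeff_three_mul_prod (n : ℕ) :
    coeff (3 * n) (∏ k ∈ range (3 * n + 1),
      ((1 + X ^ (k + 1)) ^ 2 * ((1 - X ^ (k + 1))⁻¹) ^ 2) : (ZMod 3)⟦X⟧) =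
      (-1) ^ n * (r2 n : ZMod 3) := by
  have h := coeff_prime_mul_pow_pred_of_mul_eq_one (p := 3)
    (PowerSeries.mul_inv_cancel _ (by rw [constantCoeff_theta]; exact one_ne_zero))
    (fun j => by rw [coeff_theta_three_mul, pow_eq_expand]) n
  rw [show 3 - 1 = 2 from rfl] at h
  rw [smodEq_X_pow_iff_coeff.mp (prod_smodEq_inv_theta_sq (3 * n + 1)) (3 * n) (by omega), h,
    coeff_theta_sq]

theorem map_invOfUnit_one {R : Type*} [CommRing R] (f : R →+* K) {φ : R⟦X⟧}
    (h : constantCoeff φ = 1) : map f (invOfUnit φ 1) = (map f φ)⁻¹ := by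
  have hf : constantCoeff (map f φ) = 1 := by
    rw [← coeff_zero_eq_constantCoeff_apply, coeff_map, coeff_zero_eq_constantCoeff_apply, h,
      map_one]
  rw [PowerSeries.eq_inv_iff_mul_eq_one (by rw [hf]; exact one_ne_zero), ← map_mul,
    invOfUnit_mul φ 1 (by simp [h]), map_one]

-- An integral model of the series defining `ppbar`, through which it is reduced modulo 3.
noncomputable def ppbarProdInt (N : ℕ) : ℤ⟦X⟧ :=
  ∏ k ∈ range N, ((1 + X ^ (k + 1)) ^ 2 * (invOfUnit (1 - X ^ (k + 1)) 1) ^ 2)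

theorem map_ppbarProdInt (N : ℕ) :
    map (Int.castRingHom K) (ppbarProdInt N) =
      ∏ k ∈ range N, ((1 + X ^ (k + 1)) ^ 2 * ((1 - X ^ (k + 1))⁻¹) ^ 2) := by
  simp only [ppbarProdInt, map_prod, map_mul, map_pow, map_add, map_one, map_X,
    map_invOfUnit_one _ (show constantCoeff (1 - X ^ (_ + 1) : ℤ⟦X⟧) = 1 by simp), map_sub]

end Ppbar

end PPBar

theorem ppbar_3n_mod3 (n : ℕ) :
    ∃ m : ℤ, ppbar (3 * n) - (-1) ^ n * (r2 n : ℚ) = 3 * m := by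
  set a := coeff (3 * n) (PPBar.ppbarProdInt (3 * n + 1))
  have ha : ppbar (3 * n) = a := by
    rw [ppbar, ← PPBar.map_ppbarProdInt, coeff_map]; rfl
  have ha3 : (((-1) ^ n * r2 n : ℤ) : ZMod 3) = a := by
    rw [show (a : ZMod 3) = Int.castRingHom (ZMod 3) a from rfl, ← coeff_map,
      PPBar.map_ppbarProdInt, PPBar.coeff_three_mul_prod]
    push_cast; rfl
  obtain ⟨m, hm⟩ := (ZMod.intCast_eq_intCast_iff_dvd_sub _ _ 3).mp ha3
  exact ⟨m, by rw [ha]; exact_mod_cast hm⟩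
end

section
/- For all α ≥ 1 and n ≥ 0, pp̄(9^α · (3n+2)) ≡ 0 (mod 3). -/
open PowerSeries Finset

namespace PPbarAux

instance fact3 : Fact (Nat.Prime 3) := ⟨by norm_num⟩

/-! ### Generic power series helpers -/

section Generic
variable {R : Type*} [CommRing R]

/-- geometric series `1/(1-X^(k+1))` -/
noncomputable def geo (k : ℕ) : PowerSeries R :=
  PowerSeries.mk fun i => if (k+1) ∣ i then 1 else 0

theorem one_sub_X_mul_geo (k : ℕ) :
    ((1 : PowerSeries R) - X ^ (k+1)) * geo k = 1 := by
  ext n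
  rw [sub_mul, one_mul, map_sub, coeff_X_pow_mul', coeff_one]
  simp only [geo, coeff_mk]
  rcases n with _ | n
  · simp
  · rw [if_neg (Nat.succ_ne_zero n)]
    by_cases h : k + 1 ≤ n + 1
    · rw [if_pos h]
      have hiff : (k+1) ∣ (n+1) ↔ (k+1) ∣ (n+1-(k+1)) := by
        constructor
        · exact fun hd => Nat.dvd_sub hd dvd_rfl
        · intro hd
          have h2 : n+1 = (n+1-(k+1)) + (k+1) := by omega
          rw [h2]; exact Nat.dvd_add hd dvd_rfl
      by_cases hd : (k+1) ∣ (n+1)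
      · rw [if_pos hd, if_pos (hiff.1 hd), sub_self]
      · rw [if_neg hd, if_neg (fun hc => hd (hiff.2 hc)), sub_self]
    · rw [if_neg h, if_neg, sub_zero]
      exact fun hd => h (Nat.le_of_dvd (Nat.succ_pos n) hd)

theorem coeff_eq_of_dvd {f g : PowerSeries R} {n s : ℕ}
    (h : (X : PowerSeries R)^s ∣ f - g) (hn : n < s) :
    coeff n f = coeff n g := by
  obtain ⟨u, hu⟩ := h
  have h0 : coeff n (f - g) = 0 := by
    rw [hu, coeff_X_pow_mul', if_neg (by omega)]
  rw [map_sub, sub_eq_zero] at h0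
  exact h0

theorem dvd_sub_one_mul {f g : PowerSeries R} {s : ℕ}
    (hf : (X : PowerSeries R)^s ∣ f - 1) (hg : (X : PowerSeries R)^s ∣ g - 1) :
    (X : PowerSeries R)^s ∣ f * g - 1 := by
  have h : f * g - 1 = f * (g - 1) + (f - 1) := by ring
  rw [h]
  exact dvd_add (hg.mul_left f) hf

theorem dvd_prod_sub_one {ι : Type*} (t : Finset ι) (f : ι → PowerSeries R) {s : ℕ}
    (h : ∀ i ∈ t, (X : PowerSeries R)^s ∣ f i - 1) :
    (X : PowerSeries R)^s ∣ (∏ i ∈ t, f i) - 1 := by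
  refine Finset.prod_induction f (fun g => (X : PowerSeries R)^s ∣ g - 1)
    (fun a b ha hb => dvd_sub_one_mul ha hb) (by simp) h

end Generic

noncomputable def Gze (m : ℕ) : PowerSeries ℤ :=
  ∏ k ∈ range m, ((1 + X ^ (k+1)) ^ 2 * (geo k) ^ 2)

section FieldK
variable {K : Type*} [Field K]

theorem cc_one_sub (k : ℕ) : constantCoeff (R := K) (1 - X^(k+1)) ≠ 0 := by
  simp [map_sub, map_pow, constantCoeff_X]

theorem inv_one_sub_eq_map_geo (k : ℕ) :
    ((1 : PowerSeries K) - X^(k+1))⁻¹ = PowerSeries.map (Int.castRingHom K) (geo k) := by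
  rw [PowerSeries.inv_eq_iff_mul_eq_one (cc_one_sub k)]
  have h := congrArg (PowerSeries.map (Int.castRingHom K)) (one_sub_X_mul_geo (R := ℤ) k)
  simp only [map_mul, map_sub, map_one, map_pow, PowerSeries.map_X] at h
  rw [mul_comm] at h
  exact h

theorem map_Gze (m : ℕ) :
    PowerSeries.map (Int.castRingHom K) (Gze m) =
      ∏ k ∈ range m, ((1 + X ^ (k+1)) ^ 2 * ((1 - X ^ (k+1))⁻¹) ^ 2) := by
  rw [Gze, map_prod]
  refine Finset.prod_congr rfl fun k _ => ?_
  rw [map_mul, map_pow, map_pow, map_add, map_one, map_pow, PowerSeries.map_X,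
    inv_one_sub_eq_map_geo]

end FieldK

/-! ### The ZMod 3 world -/

abbrev A := PowerSeries (ZMod 3)

/-- coefficients of `φ(-q) = ∑_{n∈ℤ} (-1)^n q^{n^2}` over `ZMod 3` -/
def sqc (k : ℕ) : ZMod 3 :=
  if (Nat.sqrt k)^2 = k then (if k = 0 then 1 else 2^(Nat.sqrt k + 1)) else 0

noncomputable def Phi : A := PowerSeries.mk sqc

/-- products -/
noncomputable def Pp (m : ℕ) : A := ∏ k ∈ range m, (1 + X ^ (k+1))
noncomputable def Pm (m : ℕ) : A := ∏ k ∈ range m, (1 - X ^ (k+1))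
noncomputable def G3 (m : ℕ) : A :=
  ∏ k ∈ range m, ((1 + X ^ (k+1)) ^ 2 * ((1 - X ^ (k+1))⁻¹) ^ 2)

noncomputable def Bq : ℕ → ℕ → A
  | 0, i => if i = 0 then 1 else 0
  | (N+1), i => Bq N i + (if i = 0 then 0 else X^(2*(N+1-i)) * Bq N (i-1))

theorem Bq_zero_def (i : ℕ) : Bq 0 i = if i = 0 then 1 else 0 := rfl

theorem Bq_succ_def (N i : ℕ) :
    Bq (N+1) i = Bq N i + (if i = 0 then 0 else X^(2*(N+1-i)) * Bq N (i-1)) := rfl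

theorem Bq_zero (N : ℕ) : Bq N 0 = 1 := by
  induction N with
  | zero => simp [Bq_zero_def]
  | succ N ih => rw [Bq_succ_def, if_pos rfl, add_zero, ih]

theorem Bq_of_lt : ∀ N i, N < i → Bq N i = 0 := by
  intro N
  induction N with
  | zero => intro i h; rw [Bq_zero_def, if_neg (by omega)]
  | succ N ih =>
    intro i h
    rw [Bq_succ_def, ih i (by omega), if_neg (by omega), ih (i-1) (by omega),
      mul_zero, add_zero]

theorem Bq_diag (N : ℕ) : Bq N N = 1 := by
  induction N with
  | zero => simp [Bq_zero_def]
  | succ N ih =>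
    rw [Bq_succ_def, Bq_of_lt N (N+1) (Nat.lt_succ_self N), if_neg (Nat.succ_ne_zero N),
      Nat.sub_self, Nat.succ_sub_one, mul_zero, pow_zero, one_mul, ih, zero_add]

theorem Bq_succ' (N j : ℕ) : Bq (N+1) (j+1) = Bq N (j+1) + X^(2*(N-j)) * Bq N j := by
  rw [Bq_succ_def, if_neg (Nat.succ_ne_zero j), Nat.succ_sub_succ, Nat.succ_sub_one]

theorem Bq_pascal2 : ∀ N i, Bq (N+1) i = X^(2*i) * Bq N i + (if i = 0 then 0 else Bq N (i-1)) := by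
  intro N
  induction N with
  | zero =>
    intro i
    rcases i with _ | _ | j
    · simp [Bq_zero]
    · rw [Bq_succ' 0 0]
      simp [Bq_diag, Bq_of_lt 0 1 (by omega), Bq_zero]
    · rw [Bq_of_lt 1 (j+2) (by omega), Bq_of_lt 0 (j+2) (by omega), if_neg (by omega),
        Nat.succ_sub_one, Bq_of_lt 0 (j+1) (by omega)]
      simp
  | succ N ih =>
    intro i
    rcases i with _ | j
    · simp [Bq_zero]
    · rw [if_neg (Nat.succ_ne_zero j), Nat.succ_sub_one]
      rcases Nat.lt_or_ge (N+1) j with hj | hj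
      · rw [Bq_of_lt _ _ (by omega), Bq_of_lt _ _ (by omega), Bq_of_lt _ _ (by omega),
          mul_zero, add_zero]
      · rcases Nat.lt_or_ge N j with hj2 | hj2
        · have hjN : j = N+1 := by omega
          subst hjN
          rw [Bq_diag, Bq_of_lt _ _ (by omega), Bq_diag, mul_zero, zero_add]
        · -- j ≤ N
          have e1 : (X:A)^(2*(N+1-j)) * X^(2*j) = X^(2*(N+1)) := by
            rw [← pow_add]; congr 1; omega
          have e2 : (X:A)^(2*(j+1)) * X^(2*(N-j)) = X^(2*(N+1)) := by
            rw [← pow_add]; congr 1; omega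
          rcases Nat.eq_zero_or_pos j with rfl | hj0
          · conv_lhs => rw [Bq_succ' (N+1) 0, ih 1]
            conv_rhs => rw [Bq_succ' N 0]
            rw [if_neg (one_ne_zero), Nat.succ_sub_one, Bq_zero, Bq_zero]
            linear_combination e1 - e2
          · conv_lhs => rw [Bq_succ' (N+1) j, ih (j+1), ih j]
            conv_rhs => rw [Bq_succ' N j, Bq_succ_def N j]
            rw [if_neg (Nat.succ_ne_zero j), Nat.succ_sub_one, if_neg (by omega : ¬ j = 0),
              if_neg (by omega : ¬ j = 0)]
            linear_combination (Bq N j) * e1 - (Bq N j) * e2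

theorem Bq_symm : ∀ N i, i ≤ N → Bq N i = Bq N (N - i) := by
  intro N
  induction N with
  | zero => intro i h; interval_cases i; simp
  | succ N ih =>
    intro i h
    rcases i with _ | j
    · rw [Nat.sub_zero, Bq_zero, Bq_diag]
    · rcases Nat.lt_or_ge j N with hj | hj
      · rw [Bq_succ' N j, Bq_pascal2 N (N+1-(j+1)), show N+1-(j+1) = N-j by omega,
          if_neg (by omega : ¬ N - j = 0), show N-j-1 = N-(j+1) by omega,
          ← ih (j+1) (by omega), ih (N-j) (by omega), show N-(N-j) = j by omega]
        ring
      · have hjN : j = N := by omega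
        subst hjN
        rw [Nat.sub_self, Bq_diag, Bq_zero]

theorem Bq_prod : ∀ N i, i ≤ N →
    Bq N i * (∏ k ∈ range i, (1 - (X:A)^(2*(k+1))))
      = ∏ k ∈ range i, (1 - (X:A)^(2*(N-i+1+k))) := by
  intro N
  induction N with
  | zero => intro i h; interval_cases i; simp [Bq_zero]
  | succ N ih =>
    intro i h
    rcases i with _ | j
    · simp [Bq_zero]
    · rcases Nat.lt_or_ge j N with hj | hj
      · have hP1 : Bq N (j+1) * (∏ k ∈ range (j+1), (1 - (X:A)^(2*(k+1))))
            = ∏ k ∈ range (j+1), (1 - (X:A)^(2*(N-j+k))) := by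
          rw [ih (j+1) (by omega)]
          exact Finset.prod_congr rfl fun k _ => by
            rw [show 2*(N-(j+1)+1+k) = 2*(N-j+k) by omega]
        have hP2 := ih j (by omega)
        have hsplit : (∏ k ∈ range (j+1), (1 - (X:A)^(2*(N-j+k))))
            = (∏ k ∈ range j, (1 - (X:A)^(2*(N-j+1+k)))) * (1 - (X:A)^(2*(N-j))) := by
          rw [Finset.prod_range_succ']
          congr 1
          exact Finset.prod_congr rfl fun k _ => by
            rw [show 2*(N-j+(k+1)) = 2*(N-j+1+k) by omega]
        have hRHS : (∏ k ∈ range (j+1), (1 - (X:A)^(2*(N+1-(j+1)+1+k))))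
            = (∏ k ∈ range j, (1 - (X:A)^(2*(N-j+1+k)))) * (1 - (X:A)^(2*(N+1))) := by
          rw [Finset.prod_range_succ]
          congr 1
          · exact Finset.prod_congr rfl fun k _ => by
              rw [show 2*(N+1-(j+1)+1+k) = 2*(N-j+1+k) by omega]
          · rw [show 2*(N+1-(j+1)+1+j) = 2*(N+1) by omega]
        have e3 : (X:A)^(2*(N-j)) * X^(2*(j+1)) = X^(2*(N+1)) := by
          rw [← pow_add]; congr 1; omega
        rw [Bq_succ' N j, Finset.prod_range_succ]
        rw [Finset.prod_range_succ] at hP1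
        linear_combination hP1 + (X^(2*(N-j)) * (1 - (X:A)^(2*(j+1)))) * hP2 + hsplit - hRHS - (∏ k ∈ range j, (1 - (X:A)^(2*(N-j+1+k)))) * e3
      · have hjN : j = N := by omega
        subst hjN
        rw [Bq_succ' j j, Bq_of_lt j (j+1) (by omega), Nat.sub_self, mul_zero, pow_zero,
          one_mul, Bq_diag, zero_add, one_mul]
        exact Finset.prod_congr rfl fun k _ => by
          rw [show 2*(j+1-(j+1)+1+k) = 2*(k+1) by omega]

def eN (i n : ℕ) : ℕ := (((i:ℤ) - n).natAbs)^2

theorem eN_cast (i n : ℕ) : ((eN i n : ℕ) : ℤ) = ((i:ℤ) - n)^2 := by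
  unfold eN
  push_cast
  rw [sq_abs]

theorem eN_A (i n : ℕ) : 2*i + eN i (n+1) = eN i n + (2*n+1) := by
  have h : ((2*i + eN i (n+1) : ℕ) : ℤ) = ((eN i n + (2*n+1) : ℕ) : ℤ) := by
    push_cast [eN_cast]
    ring
  exact_mod_cast h

theorem eN_shift (i n : ℕ) : eN (i+1) (n+1) = eN i n := by
  have h : ((eN (i+1) (n+1) : ℕ) : ℤ) = ((eN i n : ℕ) : ℤ) := by
    rw [eN_cast, eN_cast]
    push_cast
    ring
  exact_mod_cast h

theorem eN_D (i n : ℕ) (h : i ≤ 2*n) :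
    2*(2*n-i) + eN (i+1+1) (n+1) = eN i n + (2*n+1) := by
  have h2 : ((2*(2*n-i) + eN (i+1+1) (n+1) : ℕ) : ℤ) = ((eN i n + (2*n+1) : ℕ) : ℤ) := by
    push_cast [eN_cast, Nat.cast_sub h]
    ring
  exact_mod_cast h2

theorem Bq_two_step (n i : ℕ) : Bq (2*n+2) i
    = X^(2*i) * Bq (2*n) i
      + (if i = 0 then 0 else ((X:A)^(2*(2*n+1)) + 1) * Bq (2*n) (i-1))
      + (if i ≤ 1 then 0 else (X:A)^(2*(2*n+2-i)) * Bq (2*n) (i-2)) := by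
  rcases i with _ | j
  · simp [Bq_zero]
  · rw [Bq_pascal2 (2*n+1) (j+1), if_neg (Nat.succ_ne_zero j), Nat.succ_sub_one,
      Bq_succ' (2*n) j, Bq_succ_def (2*n) j,
      show j+1-2 = j-1 by omega, show 2*n+2-(j+1) = 2*n+1-j by omega]
    rcases Nat.eq_zero_or_pos j with rfl | hj0
    · have e : (X:A)^(2*(0+1)) * X^(2*(2*n)) = X^(2*(2*n+1)) := by
        rw [← pow_add]; congr 1; omega
      norm_num
      linear_combination (Bq (2*n) 0) * e
    · rw [if_neg (by omega : ¬ j = 0), if_neg (by omega : ¬ j+1 = 0),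
        if_neg (by omega : ¬ j+1 ≤ 1)]
      rcases Nat.lt_or_ge (2*n) j with hj | hj
      · rw [Bq_of_lt _ _ (by omega : 2*n < j)]
        ring
      · have e : (X:A)^(2*(j+1)) * X^(2*(2*n-j)) = X^(2*(2*n+1)) := by
          rw [← pow_add]; congr 1; omega
        linear_combination (Bq (2*n) j) * e

noncomputable def Tg (n : ℕ) : A :=
  ∑ i ∈ range (2*n+1), (2:A)^(i+n) * Bq (2*n) i * X^(eN i n)

theorem Tg_zero : Tg 0 = 1 := by
  unfold Tg
  rw [Finset.sum_range_one]
  simp [Bq_zero, eN]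

theorem two_sq : (2:A)^2 = 1 := by
  rw [← map_ofNat (C (R := ZMod 3)) 2, ← map_pow, show (2:ZMod 3)^2 = 1 from rfl, map_one]

theorem two_cube : (2:A)^3 = 2 := by
  rw [← map_ofNat (C (R := ZMod 3)) 2, ← map_pow, show (2:ZMod 3)^3 = 2 from rfl, map_ofNat]

theorem three_eq_zero : (3:A) = 0 := by
  rw [← map_ofNat (C (R := ZMod 3)) 3, show (3:ZMod 3) = 0 from rfl, map_zero]

theorem Tg_succ (n : ℕ) : Tg (n+1) = Tg n * (1 + X^(2*n+1) + X^(2*(2*n+1))) := by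
  have hA : ∑ i ∈ range (2*n+1+1+1),
        (2:A)^(i+(n+1)) * (X^(2*i) * Bq (2*n) i) * X^(eN i (n+1))
      = (2 * X^(2*n+1)) * Tg n := by
    rw [Finset.sum_range_succ, Finset.sum_range_succ,
      Bq_of_lt (2*n) (2*n+1) (by omega), Bq_of_lt (2*n) (2*n+1+1) (by omega)]
    simp only [mul_zero, zero_mul, add_zero]
    rw [Tg, Finset.mul_sum]
    refine Finset.sum_congr rfl fun i _ => ?_
    have hexp : (X:A)^(2*i) * X^(eN i (n+1)) = X^(eN i n) * X^(2*n+1) := by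
      rw [← pow_add, ← pow_add]
      congr 1
      have := eN_A i n
      omega
    linear_combination ((2:A)^(i+(n+1)) * Bq (2*n) i) * hexp
  have hBC : ∑ i ∈ range (2*n+1+1+1),
        (2:A)^(i+(n+1)) * ((if i = 0 then 0 else ((X:A)^(2*(2*n+1)) + 1) * Bq (2*n) (i-1))) * X^(eN i (n+1))
      = ((X:A)^(2*(2*n+1)) + 1) * Tg n := by
    rw [Finset.sum_range_succ']
    simp only [Nat.succ_ne_zero, if_false, reduceIte, Nat.succ_sub_one, mul_zero, zero_mul,
      add_zero]
    rw [Finset.sum_range_succ, Bq_of_lt (2*n) (2*n+1) (by omega)]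
    simp only [mul_zero, zero_mul, add_zero]
    rw [Tg, Finset.mul_sum]
    refine Finset.sum_congr rfl fun i _ => ?_
    rw [eN_shift]
    linear_combination ((2:A)^(i+n) * Bq (2*n) i * X^(eN i n) * ((X:A)^(2*(2*n+1))+1)) * two_sq
  have hD : ∑ i ∈ range (2*n+1+1+1),
        (2:A)^(i+(n+1)) * ((if i ≤ 1 then 0 else (X:A)^(2*(2*n+2-i)) * Bq (2*n) (i-2))) * X^(eN i (n+1))
      = (2 * X^(2*n+1)) * Tg n := by
    rw [Finset.sum_range_succ', Finset.sum_range_succ']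
    norm_num
    rw [Tg, Finset.mul_sum]
    refine Finset.sum_congr rfl fun i hi => ?_
    rw [Finset.mem_range] at hi
    rw [show i+1+1-2 = i by omega, show 2*n+2-(i+1+1) = 2*n-i by omega]
    have hexpD : (X:A)^(2*(2*n-i)) * X^(eN (i+1+1) (n+1)) = X^(eN i n) * X^(2*n+1) := by
      rw [← pow_add, ← pow_add]
      congr 1
      have := eN_D i n (by omega)
      omega
    linear_combination ((2:A)^(i+1+1+(n+1)) * Bq (2*n) i) * hexpD
      + ((2:A)^(i+n) * Bq (2*n) i * X^(eN i n) * X^(2*n+1)) * two_cube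
  have hsum : Tg (n+1) = ∑ i ∈ range (2*n+1+1+1),
      ((2:A)^(i+(n+1)) * (X^(2*i) * Bq (2*n) i) * X^(eN i (n+1))
      + (2:A)^(i+(n+1)) * ((if i = 0 then 0 else ((X:A)^(2*(2*n+1)) + 1) * Bq (2*n) (i-1))) * X^(eN i (n+1))
      + (2:A)^(i+(n+1)) * ((if i ≤ 1 then 0 else (X:A)^(2*(2*n+2-i)) * Bq (2*n) (i-2))) * X^(eN i (n+1))) := by
    rw [Tg, show 2*(n+1)+1 = 2*n+1+1+1 by ring]
    refine Finset.sum_congr rfl fun i _ => ?_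
    rw [show 2*(n+1) = 2*n+2 by ring, Bq_two_step n i]
    ring
  rw [hsum, Finset.sum_add_distrib, Finset.sum_add_distrib, hA, hBC, hD]
  linear_combination (X^(2*n+1) * Tg n) * three_eq_zero

theorem Tg_prod (n : ℕ) : Tg n = ∏ k ∈ range n, (1 + X^(2*k+1) + X^(2*(2*k+1))) := by
  induction n with
  | zero => simpa using Tg_zero
  | succ n ih => rw [Tg_succ, ih, Finset.prod_range_succ]

theorem two_pow_C (t : ℕ) : (2:A)^t = C (R := ZMod 3) (2^t) := by
  rw [← map_ofNat (C (R := ZMod 3)) 2, ← map_pow]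

noncomputable def Psi (n : ℕ) : A :=
  ∑ j ∈ range (n+1), C (R := ZMod 3) (if j = 0 then 1 else 2^(j+1)) * X^(j^2)

theorem eN_zero' (m : ℕ) : eN 0 m = m^2 := by
  have h : ((eN 0 m : ℕ):ℤ) = ((m^2 : ℕ):ℤ) := by
    rw [eN_cast]; push_cast; ring
  exact_mod_cast h

theorem eN_last2 (n : ℕ) : eN (2*n+1+1) (n+1) = (n+1)^2 := by
  have h : ((eN (2*n+1+1) (n+1) : ℕ):ℤ) = (((n+1)^2 : ℕ):ℤ) := by
    rw [eN_cast]; push_cast; ring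
  exact_mod_cast h

theorem main_sum (n : ℕ) : ∑ i ∈ range (2*n+1), (2:A)^(i+n) * X^(eN i n) = Psi n := by
  induction n with
  | zero =>
    unfold Psi
    rw [Finset.sum_range_one, Finset.sum_range_one, eN_zero']
    simp
  | succ n ih =>
    rw [show 2*(n+1)+1 = (2*n+1+1)+1 by ring, Finset.sum_range_succ', Finset.sum_range_succ]
    have hs : ∑ i ∈ range (2*n+1), (2:A)^(i+1+(n+1)) * X^(eN (i+1) (n+1)) = Psi n := by
      rw [← ih]
      refine Finset.sum_congr rfl fun i _ => ?_
      rw [eN_shift]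
      linear_combination ((2:A)^(i+n) * X^(eN i n)) * two_sq
    rw [hs, eN_last2, eN_zero']
    have hPsi : Psi (n+1) = Psi n + C (R := ZMod 3) (2^(n+1+1)) * X^((n+1)^2) := by
      rw [Psi, Finset.sum_range_succ, ← Psi, if_neg (Nat.succ_ne_zero n)]
    rw [hPsi]
    have hpowA : (2:A)^(2*n+1+1+(n+1)) = 2^(n+1) * ((2:A)^2)^(n+1) := by
      rw [← pow_mul, ← pow_add]
      congr 1
      omega
    have hpowB : (2:A)^(0+(n+1)) = 2^(n+1) := by rw [zero_add]
    rw [hpowA, hpowB, two_sq, one_pow, mul_one, ← two_pow_C]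
    ring

noncomputable def En (n : ℕ) : A := ∏ k ∈ range n, (1 - X^(2*(k+1)))

theorem eN_left (i n : ℕ) (h : i ≤ n) : eN i n = (n-i)^2 := by
  have hc : ((eN i n : ℕ):ℤ) = (((n-i)^2 : ℕ):ℤ) := by
    rw [eN_cast]
    push_cast [Nat.cast_sub h]
    ring
  exact_mod_cast hc

theorem eN_right (i n : ℕ) (h : n ≤ i) : eN i n = (i-n)^2 := by
  have hc : ((eN i n : ℕ):ℤ) = (((i-n)^2 : ℕ):ℤ) := by
    rw [eN_cast]
    push_cast [Nat.cast_sub h]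
    ring
  exact_mod_cast hc

theorem Phi_sub_Psi (s n : ℕ) (h : s ≤ n) : (X:A)^(s+1) ∣ Phi - Psi n := by
  rw [X_pow_dvd_iff]
  intro m hm
  rw [map_sub, sub_eq_zero, Phi, coeff_mk, Psi, map_sum]
  have hterm : ∀ j, coeff (R := ZMod 3) m (C (R := ZMod 3) (if j = 0 then 1 else 2^(j+1)) * X^(j^2))
      = if m = j^2 then (if j = 0 then (1:ZMod 3) else 2^(j+1)) else 0 :=
    fun j => coeff_C_mul_X_pow _ _ _
  rw [Finset.sum_congr rfl (fun j _ => hterm j)]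
  by_cases hsq : (Nat.sqrt m)^2 = m
  · rw [Finset.sum_eq_single (Nat.sqrt m)]
    · rw [if_pos hsq.symm, sqc, if_pos hsq]
      by_cases hm0 : m = 0
      · subst hm0
        norm_num
      · rw [if_neg hm0, if_neg (fun h0 : Nat.sqrt m = 0 => hm0 (by rw [← hsq, h0]; ring))]
    · intro j _ hne
      rw [if_neg]
      intro hc
      exact hne (by rw [hc, Nat.sqrt_eq'])
    · intro habs
      exact absurd (Finset.mem_range.mpr (by have := Nat.sqrt_le_self m; omega)) habs
  · rw [sqc, if_neg hsq, Finset.sum_eq_zero]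
    intro j _
    rw [if_neg]
    intro hc
    exact hsq (by rw [hc, Nat.sqrt_eq'])

theorem BqE_le (n i : ℕ) (h : i ≤ n) : (X:A)^(2*i+2) ∣ Bq (2*n) i * En n - 1 := by
  have hsplit : En n = (∏ k ∈ range i, (1 - (X:A)^(2*(k+1))))
      * ∏ k ∈ Finset.Ico i n, (1 - (X:A)^(2*(k+1))) := by
    rw [En, ← Finset.prod_range_mul_prod_Ico _ h]
  rw [hsplit, ← mul_assoc, Bq_prod (2*n) i (by omega)]
  refine dvd_sub_one_mul ?_ ?_
  · refine dvd_prod_sub_one _ _ fun k _ => ?_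
    have he : (1 - (X:A)^(2*(2*n-i+1+k))) - 1 = -(X^(2*(2*n-i+1+k))) := by ring
    rw [he]
    exact dvd_neg.mpr (pow_dvd_pow X (by omega))
  · refine dvd_prod_sub_one _ _ fun k hk => ?_
    rw [Finset.mem_Ico] at hk
    have he : (1 - (X:A)^(2*(k+1))) - 1 = -(X^(2*(k+1))) := by ring
    rw [he]
    exact dvd_neg.mpr (pow_dvd_pow X (by omega))

theorem approx_term (n i : ℕ) (h : i ≤ 2*n) :
    (X:A)^(n+1) ∣ X^(eN i n) * (Bq (2*n) i * En n - 1) := by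
  rcases le_or_gt i n with hi | hi
  · obtain ⟨u, hu⟩ := BqE_le n i hi
    have h2 : eN i n = (n-i)^2 := eN_left i n hi
    rw [hu, ← mul_assoc, ← pow_add]
    refine Dvd.dvd.mul_right (pow_dvd_pow X ?_) u
    have hdd : n-i ≤ (n-i)^2 := Nat.le_self_pow (by norm_num) _
    omega
  · have hsym : Bq (2*n) i = Bq (2*n) (2*n-i) := Bq_symm (2*n) i h
    obtain ⟨u, hu⟩ := BqE_le n (2*n-i) (by omega)
    have h2 : eN i n = (i-n)^2 := eN_right i n (by omega)
    rw [hsym, hu, ← mul_assoc, ← pow_add]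
    refine Dvd.dvd.mul_right (pow_dvd_pow X ?_) u
    have hdd : i-n ≤ (i-n)^2 := Nat.le_self_pow (by norm_num) _
    omega

theorem gauss_phi (n : ℕ) : (X:A)^(n+1) ∣ Phi - Tg n * En n := by
  have h1 : Phi - Tg n * En n = (Phi - Psi n) + (Psi n - Tg n * En n) := by ring
  rw [h1]
  refine dvd_add (Phi_sub_Psi n n le_rfl) ?_
  have h2 : Psi n - Tg n * En n = ∑ i ∈ range (2*n+1),
      (2:A)^(i+n) * (X^(eN i n) * (1 - Bq (2*n) i * En n)) := by
    rw [← main_sum n, Tg, Finset.sum_mul, ← Finset.sum_sub_distrib]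
    refine Finset.sum_congr rfl fun i _ => ?_
    ring
  rw [h2]
  refine Finset.dvd_sum fun i hi => ?_
  rw [Finset.mem_range] at hi
  have happ := approx_term n i (by omega)
  have hneg : (X:A)^(eN i n) * (1 - Bq (2*n) i * En n)
      = -(X^(eN i n) * (Bq (2*n) i * En n - 1)) := by ring
  rw [hneg]
  exact Dvd.dvd.mul_left (dvd_neg.mpr happ) _

theorem odd_sq (k : ℕ) : (1 - (X:A)^(2*k+1))^2 = 1 + X^(2*k+1) + X^(2*(2*k+1)) := by
  linear_combination (-(X:A)^(2*k+1)) * three_eq_zero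

theorem Tg_sq (n : ℕ) : Tg n = (∏ k ∈ range n, (1 - (X:A)^(2*k+1)))^2 := by
  rw [Tg_prod, ← Finset.prod_pow]
  exact Finset.prod_congr rfl fun k _ => (odd_sq k).symm

theorem Pm_split (g : ℕ) : Pm (2*g) = (∏ k ∈ range g, (1 - (X:A)^(2*k+1))) * En g := by
  induction g with
  | zero => simp [Pm, En]
  | succ g ih =>
    have hEn : En (g+1) = En g * (1 - X^(2*(g+1))) := by
      rw [En, Finset.prod_range_succ, ← En]
    rw [show 2*(g+1) = 2*g+1+1 by ring, Pm, Finset.prod_range_succ, Finset.prod_range_succ,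
      ← Pm, ih, Finset.prod_range_succ, hEn, show 2*(g+1) = 2*g+1+1 by ring]
    ring

theorem PpPm (m : ℕ) : Pp m * Pm m = ∏ k ∈ range m, (1 - (X:A)^(2*(k+1))) := by
  rw [Pp, Pm, ← Finset.prod_mul_distrib]
  exact Finset.prod_congr rfl fun k _ => by ring

theorem ccPm (m : ℕ) : constantCoeff (R := ZMod 3) (Pm m) = 1 := by
  rw [Pm, map_prod]
  refine Finset.prod_eq_one fun k _ => ?_
  simp [map_sub, map_pow, constantCoeff_X]

theorem dvd_mul_cancel_right {f u : A} {t : ℕ}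
    (h : (X:A)^t ∣ f * u) (hu : constantCoeff (R := ZMod 3) u ≠ 0) : (X:A)^t ∣ f := by
  have hc := PowerSeries.mul_inv_cancel u hu
  have h2 : f = (f * u) * u⁻¹ := by rw [mul_assoc, hc, mul_one]
  rw [h2]
  exact h.mul_right _

theorem gauss_dvd (s : ℕ) :
    (X:A)^(s+1) ∣ Phi * Pp (2*(s+1)) - Pm (2*(s+1)) := by
  set g := s+1 with hg
  have hphi : (X:A)^(s+1) ∣ Phi - Tg g * En g :=
    dvd_trans (pow_dvd_pow X (by omega)) (gauss_phi g)
  have htail : (X:A)^(s+1) ∣ (∏ k ∈ Finset.Ico g (2*g), (1 - (X:A)^(2*(k+1)))) - 1 := by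
    refine dvd_prod_sub_one _ _ fun k hk => ?_
    rw [Finset.mem_Ico] at hk
    have he : (1 - (X:A)^(2*(k+1))) - 1 = -(X^(2*(k+1))) := by ring
    rw [he]
    exact dvd_neg.mpr (pow_dvd_pow X (by omega))
  have hEn2 : (∏ k ∈ range (2*g), (1 - (X:A)^(2*(k+1))))
      = En g * ∏ k ∈ Finset.Ico g (2*g), (1 - (X:A)^(2*(k+1))) := by
    rw [En, ← Finset.prod_range_mul_prod_Ico _ (by omega : g ≤ 2*g)]
  have hPpPm := PpPm (2*g)
  have hPm2 : Pm (2*g) * Pm (2*g) = Tg g * (En g * En g) := by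
    rw [Pm_split g, Tg_sq g]
    ring
  have key2 : (Phi * Pp (2*g) - Pm (2*g)) * Pm (2*g)
      = En g * (∏ k ∈ Finset.Ico g (2*g), (1 - (X:A)^(2*(k+1)))) * (Phi - Tg g * En g)
        + Tg g * (En g * En g) * ((∏ k ∈ Finset.Ico g (2*g), (1 - (X:A)^(2*(k+1)))) - 1) := by
    linear_combination Phi * hPpPm + Phi * hEn2 - hPm2
  have hdvd : (X:A)^(s+1) ∣ (Phi * Pp (2*g) - Pm (2*g)) * Pm (2*g) := by
    rw [key2]
    exact dvd_add (hphi.mul_left _) (htail.mul_left _)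
  exact dvd_mul_cancel_right hdvd (by rw [ccPm]; exact one_ne_zero)


theorem cube_coeff (f : A) (k : ℕ) :
    coeff (R := ZMod 3) k (f^3) = if 3 ∣ k then coeff (R := ZMod 3) (k/3) f else 0 := by
  set t : Polynomial (ZMod 3) := trunc (k+1) f with ht
  have hd : (X:A)^(k+1) ∣ f - (t : A) := by
    rw [X_pow_dvd_iff]
    intro m hm
    rw [map_sub, ht, Polynomial.coeff_coe, coeff_trunc, if_pos hm, sub_self]
  have hcube : (X:A)^(k+1) ∣ f^3 - (t:A)^3 := by
    have h : f^3 - (t:A)^3 = (f - t) * (f^2 + f*(t:A) + (t:A)^2) := by ring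
    rw [h]
    exact hd.mul_right _
  have h1 : coeff (R := ZMod 3) k (f^3) = coeff (R := ZMod 3) k ((t:A)^3) :=
    coeff_eq_of_dvd hcube (Nat.lt_succ_self k)
  have h2 : (t^3 : Polynomial (ZMod 3)) = Polynomial.expand _ 3 t := by
    have h := Polynomial.map_frobenius_expand (p := 3) t
    rw [ZMod.frobenius_zmod, Polynomial.map_id] at h
    exact h.symm
  rw [h1, ← Polynomial.coe_pow, Polynomial.coeff_coe, h2,
    Polynomial.coeff_expand (by norm_num : 0 < 3)]
  by_cases h3 : 3 ∣ k
  · rw [if_pos h3, if_pos h3, ht, coeff_trunc, if_pos (by omega : k/3 < k+1)]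
  · rw [if_neg h3, if_neg h3]

theorem sqc_nine (r : ℕ) : sqc (9*r) = sqc r := by
  by_cases hsq : (Nat.sqrt r)^2 = r
  · set j := Nat.sqrt r with hj
    have h9 : Nat.sqrt (9*r) = 3*j := by
      rw [← hsq, show 9*j^2 = (3*j)^2 by ring, Nat.sqrt_eq']
    have h9sq : (Nat.sqrt (9*r))^2 = 9*r := by rw [h9, ← hsq]; ring
    rw [sqc, sqc, if_pos h9sq, if_pos hsq, h9]
    rcases Nat.eq_zero_or_pos r with rfl | hr
    · norm_num
    · rw [if_neg (by omega : ¬ 9*r = 0), if_neg (by omega : ¬ r = 0)]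
      have hexp : (2:ZMod 3)^(3*j+1) = 2^(j+1) * ((2:ZMod 3)^2)^j := by
        rw [← pow_mul, ← pow_add]
        congr 1
        ring
      have h4 : ((2:ZMod 3)^2) = 1 := by decide
      rw [hexp, h4, one_pow, mul_one, ← hj]
  · have h9 : ¬ (Nat.sqrt (9*r))^2 = 9*r := by
      intro hc
      have h3c : 3 ∣ Nat.sqrt (9*r) := by
        refine Nat.Prime.dvd_of_dvd_pow (p := 3) (n := 2) (by norm_num) ?_
        exact ⟨3*r, by omega⟩
      obtain ⟨d, hd⟩ := h3c
      rw [hd] at hc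
      apply hsq
      have hdr : d^2 = r := by nlinarith
      rw [← hdr, Nat.sqrt_eq']
    rw [sqc, sqc, if_neg hsq, if_neg h9]

theorem phi_cube_coeff (i : ℕ) :
    coeff (R := ZMod 3) (3*i) Phi = coeff (R := ZMod 3) i (Phi^3) := by
  rw [cube_coeff]
  simp only [Phi, coeff_mk]
  by_cases h3 : 3 ∣ i
  · obtain ⟨r, rfl⟩ := h3
    rw [if_pos ⟨r, rfl⟩, Nat.mul_div_cancel_left r (by norm_num : 0 < 3),
      show 3*(3*r) = 9*r by ring, sqc_nine]
  · rw [if_neg h3, sqc, if_neg]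
    intro hc
    have h3c : 3 ∣ Nat.sqrt (3*i) := by
      refine Nat.Prime.dvd_of_dvd_pow (p := 3) (n := 2) (by norm_num) ?_
      exact ⟨i, hc⟩
    obtain ⟨d, hd⟩ := h3c
    rw [hd] at hc
    apply h3
    have h9 : 3*(3*d^2) = 3*i := by nlinarith
    exact ⟨d^2, by omega⟩

theorem diss (f : A) (N : ℕ) :
    coeff (R := ZMod 3) (3*N) (Phi * f^3) = coeff (R := ZMod 3) N (Phi^3 * f) := by
  rw [coeff_mul, coeff_mul]
  have himg : Finset.image (fun p : ℕ×ℕ => (3*p.1, 3*p.2)) (antidiagonal N)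
      ⊆ antidiagonal (3*N) := by
    intro p hp
    simp only [Finset.mem_image, HasAntidiagonal.mem_antidiagonal] at *
    obtain ⟨q, hq, rfl⟩ := hp
    omega
  rw [← Finset.sum_subset himg ?_]
  · rw [Finset.sum_image ?_]
    · refine Finset.sum_congr rfl fun p _ => ?_
      dsimp only
      rw [cube_coeff f, if_pos (dvd_mul_right 3 p.2),
        Nat.mul_div_cancel_left p.2 (by norm_num : 0 < 3), phi_cube_coeff]
    · intro p _ q _ h
      have h1 := congrArg Prod.fst h
      have h2 := congrArg Prod.snd h
      simp only at h1 h2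
      exact Prod.ext (by omega) (by omega)
  · intro p hp hni
    by_cases h2 : 3 ∣ p.2
    · exfalso
      apply hni
      rw [HasAntidiagonal.mem_antidiagonal] at hp
      have h1 : 3 ∣ p.1 := by omega
      simp only [Finset.mem_image, HasAntidiagonal.mem_antidiagonal]
      have he1 : 3*(p.1/3) = p.1 := Nat.mul_div_cancel' h1
      have he2 : 3*(p.2/3) = p.2 := Nat.mul_div_cancel' h2
      exact ⟨(p.1/3, p.2/3), by omega, Prod.ext he1 he2⟩
    · rw [cube_coeff, if_neg h2, mul_zero]

theorem three_dvd_of_sq_sum (a b c : ℕ) (h : a^2 + b^2 = 3 * c) : 3 ∣ a ∧ 3 ∣ b := by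
  have hcast : ((a:ZMod 3))^2 + (b:ZMod 3)^2 = 0 := by
    have h2 := congrArg (Nat.cast : ℕ → ZMod 3) h
    push_cast at h2
    rw [h2, show ((3:ZMod 3)) = 0 from rfl, zero_mul]
  have hz : ∀ x y : ZMod 3, x^2+y^2 = 0 → x = 0 ∧ y = 0 := by decide
  obtain ⟨h1, h2⟩ := hz _ _ hcast
  exact ⟨(ZMod.natCast_eq_zero_iff a 3).1 h1,
    (ZMod.natCast_eq_zero_iff b 3).1 h2⟩

theorem norep : ∀ (α : ℕ), 1 ≤ α → ∀ (t a b : ℕ), a^2 + b^2 ≠ 3^(2*α-1) * (3*t+2) := by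
  intro α
  induction α with
  | zero => omega
  | succ α ih =>
    intro _ t a b h
    have hone : (3:ℕ)^(2*(α+1)-1) = 3*3^(2*(α+1)-2) := by
      have he : 2*(α+1)-1 = (2*(α+1)-2)+1 := by omega
      rw [he, pow_succ']
    obtain ⟨ha, hb⟩ := three_dvd_of_sq_sum a b (3^(2*(α+1)-2) * (3*t+2))
      (by rw [h, hone, mul_assoc])
    obtain ⟨a', rfl⟩ := ha
    obtain ⟨b', rfl⟩ := hb
    have h9 : 9 * (a'^2 + b'^2) = 3^(2*(α+1)-1) * (3*t+2) := by
      rw [← h]; ring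
    rcases Nat.eq_zero_or_pos α with rfl | hpos
    · norm_num at h9
      omega
    · have hsplit : (3:ℕ)^(2*(α+1)-1) = 9 * 3^(2*α-1) := by
        rw [show (9:ℕ) = 3^2 by norm_num, ← pow_add]
        congr 1
        omega
      rw [hsplit, mul_assoc] at h9
      exact ih hpos t a' b' (Nat.eq_of_mul_eq_mul_left (by norm_num) h9)

theorem fct_sub_one (k s : ℕ) (h : s ≤ k+1) :
    (X:A)^s ∣ ((1 + X^(k+1))^2 * ((1 - X^(k+1))⁻¹)^2 - 1) := by
  refine dvd_trans (pow_dvd_pow X h) ?_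
  have h1 : (X:A)^(k+1) ∣ (1 + X^(k+1)) - 1 := by simp
  have h2 : (X:A)^(k+1) ∣ (1 - X^(k+1))⁻¹ - 1 := by
    have hc := PowerSeries.mul_inv_cancel _ (cc_one_sub (K := ZMod 3) k)
    have heq : (1 - (X:A)^(k+1))⁻¹ - 1 = X^(k+1) * (1 - X^(k+1))⁻¹ := by
      linear_combination hc
    rw [heq]
    exact Dvd.intro _ rfl
  have hsq1 : (X:A)^(k+1) ∣ (1 + X^(k+1))^2 - 1 := by
    rw [pow_two]
    exact dvd_sub_one_mul h1 h1
  have hsq2 : (X:A)^(k+1) ∣ ((1 - X^(k+1))⁻¹)^2 - 1 := by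
    rw [pow_two]
    exact dvd_sub_one_mul h2 h2
  exact dvd_sub_one_mul hsq1 hsq2

theorem coeff_G3_stable {n m : ℕ} (h : n < m) :
    coeff (R := ZMod 3) n (G3 m) = coeff (R := ZMod 3) n (G3 (n+1)) := by
  have hsplit : G3 m = G3 (n+1) * ∏ k ∈ Finset.Ico (n+1) m,
      ((1 + X ^ (k+1)) ^ 2 * ((1 - (X:A) ^ (k+1))⁻¹) ^ 2) := by
    rw [G3, G3, Finset.range_eq_Ico,
      ← Finset.prod_Ico_consecutive _ (Nat.zero_le (n+1)) h, Finset.range_eq_Ico]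
  refine coeff_eq_of_dvd ?_ (Nat.lt_succ_self n)
  rw [hsplit]
  have htail : (X:A)^(n+1) ∣ (∏ k ∈ Finset.Ico (n+1) m,
      ((1 + X ^ (k+1)) ^ 2 * ((1 - (X:A) ^ (k+1))⁻¹) ^ 2)) - 1 := by
    refine dvd_prod_sub_one _ _ fun k hk => ?_
    rw [Finset.mem_Ico] at hk
    exact fct_sub_one k (n+1) (by omega)
  have hfull : G3 (n+1) * (∏ k ∈ Finset.Ico (n+1) m,
      ((1 + X ^ (k+1)) ^ 2 * ((1 - (X:A) ^ (k+1))⁻¹) ^ 2)) - G3 (n+1)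
      = G3 (n+1) * ((∏ k ∈ Finset.Ico (n+1) m,
      ((1 + X ^ (k+1)) ^ 2 * ((1 - (X:A) ^ (k+1))⁻¹) ^ 2)) - 1) := by ring
  rw [hfull]
  exact htail.mul_left _

theorem ccPp (m : ℕ) : constantCoeff (R := ZMod 3) (Pp m) = 1 := by
  rw [Pp, map_prod]
  refine Finset.prod_eq_one fun k _ => ?_
  simp [map_add, map_pow, constantCoeff_X]

theorem key (N : ℕ) (n : ℕ) (hn : n = 3*N) :
    coeff (R := ZMod 3) n (G3 (n+1)) = coeff (R := ZMod 3) N (Phi^2) := by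
  have hM : n < 2*(n+1) := by omega
  rw [← coeff_G3_stable hM]
  have hg := gauss_dvd n
  have hsq : (X:A)^(n+1) ∣ (Phi * Pp (2*(n+1)))^2 - (Pm (2*(n+1)))^2 := by
    have he : (Phi * Pp (2*(n+1)))^2 - (Pm (2*(n+1)))^2
        = (Phi * Pp (2*(n+1)) - Pm (2*(n+1))) * (Phi * Pp (2*(n+1)) + Pm (2*(n+1))) := by
      ring
    rw [he]
    exact hg.mul_right _
  have hG3M : G3 (2*(n+1)) * (Pm (2*(n+1)))^2 = (Pp (2*(n+1)))^2 := by
    rw [G3, Pp, Pm, ← Finset.prod_pow, ← Finset.prod_mul_distrib, ← Finset.prod_pow]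
    refine Finset.prod_congr rfl fun k _ => ?_
    have hinv : (1 - (X:A)^(k+1)) * (1 - X^(k+1))⁻¹ = 1 :=
      PowerSeries.mul_inv_cancel _ (cc_one_sub (K := ZMod 3) k)
    calc (1 + (X:A)^(k+1))^2 * ((1 - X^(k+1))⁻¹)^2 * (1 - X^(k+1))^2
        = (1 + X^(k+1))^2 * ((1 - X^(k+1)) * (1 - X^(k+1))⁻¹)^2 := by ring
      _ = (1 + X^(k+1))^2 := by rw [hinv, one_pow, mul_one]
  have h2 : (X:A)^(n+1) ∣ (Phi^2 * G3 (2*(n+1)) - 1) * (Pp (2*(n+1)))^2 := by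
    have heq : G3 (2*(n+1)) * ((Phi * Pp (2*(n+1)))^2 - (Pm (2*(n+1)))^2)
        = (Phi^2 * G3 (2*(n+1)) - 1) * (Pp (2*(n+1)))^2 := by
      linear_combination -hG3M
    rw [← heq]
    exact hsq.mul_left _
  have h2' : (X:A)^(n+1) ∣ Phi^2 * G3 (2*(n+1)) - 1 := by
    refine dvd_mul_cancel_right h2 ?_
    rw [map_pow, ccPp, one_pow]
    exact one_ne_zero
  have hccPhi : constantCoeff (R := ZMod 3) Phi ≠ 0 := by
    have hcc : constantCoeff (R := ZMod 3) Phi = 1 := by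
      rw [Phi, PowerSeries.constantCoeff_mk]
      rfl
    rw [hcc]
    exact one_ne_zero
  have hPH : Phi * Phi⁻¹ = 1 := PowerSeries.mul_inv_cancel _ hccPhi
  have h3 : (X:A)^(n+1) ∣ G3 (2*(n+1)) - (Phi⁻¹)^2 := by
    have heq : G3 (2*(n+1)) - (Phi⁻¹)^2 = (Phi^2 * G3 (2*(n+1)) - 1) * (Phi⁻¹)^2 := by
      linear_combination (-(G3 (2*(n+1))) * (Phi * Phi⁻¹ + 1)) * hPH
    rw [heq]
    exact h2'.mul_right _
  rw [coeff_eq_of_dvd h3 (Nat.lt_succ_self n)]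
  have hH2 : (Phi⁻¹)^2 = Phi * (Phi⁻¹)^3 := by
    linear_combination (-(Phi⁻¹)^2) * hPH
  rw [hH2, hn, diss]
  have hPhi3 : Phi^3 * Phi⁻¹ = Phi^2 := by
    rw [pow_succ, mul_assoc, hPH, mul_one]
  rw [hPhi3]

theorem coeff_phi_sq_zero (α : ℕ) (hα : 1 ≤ α) (t : ℕ) :
    coeff (R := ZMod 3) (3^(2*α-1) * (3*t+2)) (Phi^2) = 0 := by
  rw [pow_two, coeff_mul]
  apply Finset.sum_eq_zero
  intro p hp
  simp only [Phi, coeff_mk]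
  by_cases h1 : (Nat.sqrt p.1)^2 = p.1
  · by_cases h2 : (Nat.sqrt p.2)^2 = p.2
    · exfalso
      rw [HasAntidiagonal.mem_antidiagonal] at hp
      exact norep α hα t (Nat.sqrt p.1) (Nat.sqrt p.2) (by rw [h1, h2, hp])
    · simp only [sqc]
      rw [if_neg h2, mul_zero]
  · simp only [sqc]
    rw [if_neg h1, zero_mul]

/-! ### Transfer from ℚ to ℤ to ZMod 3 -/

theorem ppbar_eq_int (n : ℕ) :
    ppbar n = ((coeff (R := ℤ) n (Gze (n+1)) : ℤ) : ℚ) := by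
  rw [ppbar, ← map_Gze, PowerSeries.coeff_map]
  rfl

theorem int_to_zmod (n : ℕ) :
    ((coeff (R := ℤ) n (Gze (n+1)) : ℤ) : ZMod 3) = coeff (R := ZMod 3) n (G3 (n+1)) := by
  rw [G3, ← map_Gze, PowerSeries.coeff_map]
  rfl

end PPbarAux

theorem ppbar_9a_3n2_mod3 (α : ℕ) (hα : 1 ≤ α) (n : ℕ) :
    ∃ m : ℤ, ppbar (9 ^ α * (3 * n + 2)) = 3 * m := by
  classical
  set nn := 9 ^ α * (3 * n + 2) with hnn
  have h3 : nn = 3 * (3^(2*α-1) * (3*n+2)) := by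
    rw [hnn]
    have h9 : (9:ℕ)^α = 3^(2*α) := by
      rw [show (9:ℕ) = 3^2 by norm_num, ← pow_mul]
    have hp : (3:ℕ)^(2*α) = 3 * 3^(2*α-1) := by
      conv_lhs => rw [show 2*α = (2*α-1)+1 by omega]
      rw [pow_succ]; ring
    rw [h9, hp]; ring
  have hz : coeff (R := ZMod 3) nn (PPbarAux.G3 (nn+1)) = 0 := by
    rw [PPbarAux.key (3^(2*α-1) * (3*n+2)) nn h3]
    exact PPbarAux.coeff_phi_sq_zero α hα n
  have hint : ((coeff (R := ℤ) nn (PPbarAux.Gze (nn+1)) : ℤ) : ZMod 3) = 0 := by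
    rw [PPbarAux.int_to_zmod]; exact hz
  rw [ZMod.intCast_zmod_eq_zero_iff_dvd] at hint
  obtain ⟨m, hm⟩ := hint
  refine ⟨m, ?_⟩
  rw [PPbarAux.ppbar_eq_int, hm]
  push_cast
  ring
end
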